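/- arXiv:0902.0066 — 5 statements merged into one kernel-verified Lean document; each statement's English description precedes it below -/
import Mathlib

section
/- Let ζ : ℝ³ → ℝ³ be a continuously differentiable vector field and let x₀ be a point where ζ(x₀) ≠ 0. Write ζ̂ = ζ/|ζ|. Then at x₀: curl(|ζ| ζ) = |ζ| curl ζ + (ζ × curl ζ) × ζ̂ − ζ × ((ζ̂·∇)ζ). -/
/-!
Along a coordinate direction, `∂(|ζ| ζᵢ) = (ζ̂ · ∂ζ) ζᵢ + |ζ| ∂ζᵢ`, since the derivative of
`|ζ| = √(ζ · ζ)` is `ζ̂ · ∂ζ` wherever `ζ ≠ 0`. Substituting this into the components of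
`curl (|ζ| ζ)` and expanding the triple products on the right-hand side, both sides agree after
clearing the denominator `|ζ|`.
-/

open MeasureTheory Real

noncomputable section

/-- Partial derivative in the first (x) variable. -/
def pX (f : ℝ → ℝ → ℝ → ℝ) : ℝ → ℝ → ℝ → ℝ := fun x y z => deriv (fun s => f s y z) x
/-- Partial derivative in the second (y) variable. -/
def pY (f : ℝ → ℝ → ℝ → ℝ) : ℝ → ℝ → ℝ → ℝ := fun x y z => deriv (fun s => f x s z) y
/-- Partial derivative in the third (z) variable. -/
def pZ (f : ℝ → ℝ → ℝ → ℝ) : ℝ → ℝ → ℝ → ℝ := fun x y z => deriv (fun s => f x y s) z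

/-- First component of the curl of the vector field (f, g, h). -/
def curl1 (f g h : ℝ → ℝ → ℝ → ℝ) : ℝ → ℝ → ℝ → ℝ := fun x y z => pY h x y z - pZ g x y z
/-- Second component of the curl of the vector field (f, g, h). -/
def curl2 (f g h : ℝ → ℝ → ℝ → ℝ) : ℝ → ℝ → ℝ → ℝ := fun x y z => pZ f x y z - pX h x y z
/-- Third component of the curl of the vector field (f, g, h). -/
def curl3 (f g h : ℝ → ℝ → ℝ → ℝ) : ℝ → ℝ → ℝ → ℝ := fun x y z => pX g x y z - pY f x y z

/-- C^k regularity of a scalar field on ℝ³ (as a function of the joint variable). -/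
def ContK (k : ℕ) (f : ℝ → ℝ → ℝ → ℝ) : Prop :=
  ContDiff ℝ k (fun p : ℝ × ℝ × ℝ => f p.1 p.2.1 p.2.2)

lemma hasDerivAt_sqrt_sum_sq {F G H : ℝ → ℝ} {F' G' H' t : ℝ} (hF : HasDerivAt F F' t)
    (hG : HasDerivAt G G' t) (hH : HasDerivAt H H' t) (hq : F t ^ 2 + G t ^ 2 + H t ^ 2 ≠ 0) :
    HasDerivAt (fun s => √(F s ^ 2 + G s ^ 2 + H s ^ 2))
      ((F t * F' + G t * G' + H t * H') / √(F t ^ 2 + G t ^ 2 + H t ^ 2)) t := by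
  have hsum : HasDerivAt (fun s => F s ^ 2 + G s ^ 2 + H s ^ 2)
      (2 * (F t * F' + G t * G' + H t * H')) t :=
    (((hF.fun_pow 2).fun_add (hG.fun_pow 2)).fun_add (hH.fun_pow 2)).congr_deriv (by norm_num; ring)
  convert hsum.sqrt hq using 1
  field_simp

lemma sq_add_sq_add_sq_ne_zero {a b c : ℝ} (h : ¬(a = 0 ∧ b = 0 ∧ c = 0)) :
    a ^ 2 + b ^ 2 + c ^ 2 ≠ 0 := by
  contrapose! h
  obtain ⟨hab, hc⟩ := (add_eq_zero_iff_of_nonneg (by positivity) (sq_nonneg c)).mp h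
  obtain ⟨ha, hb⟩ := (add_eq_zero_iff_of_nonneg (sq_nonneg a) (sq_nonneg b)).mp hab
  exact ⟨pow_eq_zero_iff two_ne_zero |>.mp ha, pow_eq_zero_iff two_ne_zero |>.mp hb,
    pow_eq_zero_iff two_ne_zero |>.mp hc⟩

namespace ContK

variable {k : ℕ} {f : ℝ → ℝ → ℝ → ℝ}

lemma differentiableAt (hf : ContK k f) (hk : k ≠ 0) (x y z : ℝ) :
    DifferentiableAt ℝ (fun p : ℝ × ℝ × ℝ => f p.1 p.2.1 p.2.2) (x, y, z) :=
  (hf.differentiable (by exact_mod_cast hk)).differentiableAt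

lemma hasDerivAt_pX (hf : ContK k f) (hk : k ≠ 0) (x y z : ℝ) :
    HasDerivAt (fun s => f s y z) (pX f x y z) x :=
  ((hf.differentiableAt hk x y z).comp x (f := fun s : ℝ => (s, y, z)) (by fun_prop)).hasDerivAt

lemma hasDerivAt_pY (hf : ContK k f) (hk : k ≠ 0) (x y z : ℝ) :
    HasDerivAt (fun s => f x s z) (pY f x y z) y :=
  ((hf.differentiableAt hk x y z).comp y (f := fun s : ℝ => (x, s, z)) (by fun_prop)).hasDerivAt

lemma hasDerivAt_pZ (hf : ContK k f) (hk : k ≠ 0) (x y z : ℝ) :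
    HasDerivAt (fun s => f x y s) (pZ f x y z) z :=
  ((hf.differentiableAt hk x y z).comp z (f := fun s : ℝ => (x, y, s)) (by fun_prop)).hasDerivAt

end ContK

section NormMul

variable {k : ℕ} {f g h u : ℝ → ℝ → ℝ → ℝ} (hf : ContK k f) (hg : ContK k g) (hh : ContK k h)
  (hu : ContK k u) (hk : k ≠ 0) {x y z : ℝ} (hq : f x y z ^ 2 + g x y z ^ 2 + h x y z ^ 2 ≠ 0)
include hf hg hh hu hk hq

lemma pX_sqrt_sum_sq_mul :
    pX (fun a b c => √(f a b c ^ 2 + g a b c ^ 2 + h a b c ^ 2) * u a b c) x y z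
      = (f x y z * pX f x y z + g x y z * pX g x y z + h x y z * pX h x y z)
          / √(f x y z ^ 2 + g x y z ^ 2 + h x y z ^ 2) * u x y z
        + √(f x y z ^ 2 + g x y z ^ 2 + h x y z ^ 2) * pX u x y z :=
  ((hasDerivAt_sqrt_sum_sq (hf.hasDerivAt_pX hk x y z) (hg.hasDerivAt_pX hk x y z)
    (hh.hasDerivAt_pX hk x y z) hq).mul (hu.hasDerivAt_pX hk x y z)).deriv

lemma pY_sqrt_sum_sq_mul :
    pY (fun a b c => √(f a b c ^ 2 + g a b c ^ 2 + h a b c ^ 2) * u a b c) x y z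
      = (f x y z * pY f x y z + g x y z * pY g x y z + h x y z * pY h x y z)
          / √(f x y z ^ 2 + g x y z ^ 2 + h x y z ^ 2) * u x y z
        + √(f x y z ^ 2 + g x y z ^ 2 + h x y z ^ 2) * pY u x y z :=
  ((hasDerivAt_sqrt_sum_sq (hf.hasDerivAt_pY hk x y z) (hg.hasDerivAt_pY hk x y z)
    (hh.hasDerivAt_pY hk x y z) hq).mul (hu.hasDerivAt_pY hk x y z)).deriv

lemma pZ_sqrt_sum_sq_mul :
    pZ (fun a b c => √(f a b c ^ 2 + g a b c ^ 2 + h a b c ^ 2) * u a b c) x y z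
      = (f x y z * pZ f x y z + g x y z * pZ g x y z + h x y z * pZ h x y z)
          / √(f x y z ^ 2 + g x y z ^ 2 + h x y z ^ 2) * u x y z
        + √(f x y z ^ 2 + g x y z ^ 2 + h x y z ^ 2) * pZ u x y z :=
  ((hasDerivAt_sqrt_sum_sq (hf.hasDerivAt_pZ hk x y z) (hg.hasDerivAt_pZ hk x y z)
    (hh.hasDerivAt_pZ hk x y z) hq).mul (hu.hasDerivAt_pZ hk x y z)).deriv

end NormMul

/-- Identity (T1Gb): at a point where ζ ≠ 0,
curl(|ζ|ζ) = |ζ| curl ζ + (ζ × curl ζ) × ζ̂ − ζ × ((ζ̂·∇)ζ), stated componentwise. -/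
theorem curl_norm_mul_identity (z1 z2 z3 : ℝ → ℝ → ℝ → ℝ)
    (h1 : ContK 1 z1) (h2 : ContK 1 z2) (h3 : ContK 1 z3)
    (x y z : ℝ)
    (hne : ¬((z1 x y z = 0) ∧ (z2 x y z = 0) ∧ (z3 x y z = 0))) :
    (let m : ℝ → ℝ → ℝ → ℝ :=
       fun a b c => Real.sqrt ((z1 a b c)^2 + (z2 a b c)^2 + (z3 a b c)^2)
     let n : ℝ := m x y z
     let zh1 : ℝ := z1 x y z / n
     let zh2 : ℝ := z2 x y z / n
     let zh3 : ℝ := z3 x y z / n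
     let c1 : ℝ := curl1 z1 z2 z3 x y z
     let c2 : ℝ := curl2 z1 z2 z3 x y z
     let c3 : ℝ := curl3 z1 z2 z3 x y z
     -- d = ζ × curl ζ
     let d1 : ℝ := z2 x y z * c3 - z3 x y z * c2
     let d2 : ℝ := z3 x y z * c1 - z1 x y z * c3
     let d3 : ℝ := z1 x y z * c2 - z2 x y z * c1
     -- e = (ζ̂·∇)ζ
     let e1 : ℝ := zh1 * pX z1 x y z + zh2 * pY z1 x y z + zh3 * pZ z1 x y z
     let e2 : ℝ := zh1 * pX z2 x y z + zh2 * pY z2 x y z + zh3 * pZ z2 x y z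
     let e3 : ℝ := zh1 * pX z3 x y z + zh2 * pY z3 x y z + zh3 * pZ z3 x y z
     (curl1 (fun a b c => m a b c * z1 a b c) (fun a b c => m a b c * z2 a b c)
        (fun a b c => m a b c * z3 a b c) x y z
        = n * c1 + (d2 * zh3 - d3 * zh2) - (z2 x y z * e3 - z3 x y z * e2))
     ∧ (curl2 (fun a b c => m a b c * z1 a b c) (fun a b c => m a b c * z2 a b c)
        (fun a b c => m a b c * z3 a b c) x y z
        = n * c2 + (d3 * zh1 - d1 * zh3) - (z3 x y z * e1 - z1 x y z * e3))
     ∧ (curl3 (fun a b c => m a b c * z1 a b c) (fun a b c => m a b c * z2 a b c)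
        (fun a b c => m a b c * z3 a b c) x y z
        = n * c3 + (d1 * zh2 - d2 * zh1) - (z1 x y z * e2 - z2 x y z * e1))) := by
  intro m n zh1 zh2 zh3 c1 c2 c3 d1 d2 d3 e1 e2 e3
  have hq := sq_add_sq_add_sq_ne_zero hne
  simp only [n, m, zh1, zh2, zh3, d1, d2, d3, e1, e2, e3, c1, c2, c3, curl1, curl2, curl3]
  rw [pX_sqrt_sum_sq_mul h1 h2 h3 h2 one_ne_zero hq, pX_sqrt_sum_sq_mul h1 h2 h3 h3 one_ne_zero hq,
    pY_sqrt_sum_sq_mul h1 h2 h3 h1 one_ne_zero hq, pY_sqrt_sum_sq_mul h1 h2 h3 h3 one_ne_zero hq,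
    pZ_sqrt_sum_sq_mul h1 h2 h3 h1 one_ne_zero hq, pZ_sqrt_sum_sq_mul h1 h2 h3 h2 one_ne_zero hq]
  refine ⟨?_, ?_, ?_⟩ <;> field_simp <;> ring
end
end

section
/- Let u, v, w be smooth on ℝ² × [0,H], L-periodic in x and y, with u_z = v_z = 0 and w = 0 at z = 0 and z = H, and let ε > 0 satisfy the incompressibility relation ε w_z = −(u_x + v_y) everywhere. Set ω₃ = v_x − u_y and ζ = (−v_z, u_z, ω₃). Then for any 0 < δ₀ < 1: ∫_Ω |curl ζ|² dV ≥ min{1, 2(1−δ₀)} ∫_Ω |∇₂ω₃|² dV + 2δ₀ ∫_Ω (|u_{yz}|² + |v_{xz}|²) dV + ∫_Ω (|u_{zz}|² + |v_{zz}|² + ε²(1−δ₀)|w_{zz}|²) dV. -/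
open MeasureTheory Real

noncomputable section

/-- The cylinder Ω = [0,L] × [0,L] × [0,H]. -/
def Omega (L H : ℝ) : Set (ℝ × ℝ × ℝ) := Set.Icc 0 L ×ˢ Set.Icc 0 L ×ˢ Set.Icc 0 H

/-- Smoothness (C^∞) of a scalar field on ℝ³. -/
def Smooth3 (f : ℝ → ℝ → ℝ → ℝ) : Prop := ContDiff ℝ (⊤ : ℕ∞) (fun p : ℝ × ℝ × ℝ => f p.1 p.2.1 p.2.2)

/-- L-periodicity in the horizontal variables x and y. -/
def PerXY (L : ℝ) (f : ℝ → ℝ → ℝ → ℝ) : Prop :=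
  ∀ x y z : ℝ, f (x + L) y z = f x y z ∧ f x (y + L) z = f x y z

/-- ω₃ = v_x − u_y. -/
def om (u v : ℝ → ℝ → ℝ → ℝ) : ℝ → ℝ → ℝ → ℝ := fun x y z => pX v x y z - pY u x y z

namespace Aux

def unc (f : ℝ → ℝ → ℝ → ℝ) : ℝ × ℝ × ℝ → ℝ := fun p => f p.1 p.2.1 p.2.2

def E1 : ℝ × ℝ × ℝ := (1, 0, 0)
def E2 : ℝ × ℝ × ℝ := (0, 1, 0)
def E3 : ℝ × ℝ × ℝ := (0, 0, 1)

variable {f g : ℝ → ℝ → ℝ → ℝ}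

theorem hasDerivAt_sliceX (hf : Smooth3 f) (x y z : ℝ) :
    HasDerivAt (fun s => f s y z) (fderiv ℝ (unc f) (x, y, z) E1) x := by
  have h1 : HasDerivAt (fun s : ℝ => (s, y, z) : ℝ → ℝ × ℝ × ℝ) E1 x :=
    (hasDerivAt_id x).prodMk ((hasDerivAt_const x y).prodMk (hasDerivAt_const x z))
  exact ((hf.differentiable (by simp) (x, y, z)).hasFDerivAt).comp_hasDerivAt x h1

theorem hasDerivAt_sliceY (hf : Smooth3 f) (x y z : ℝ) :
    HasDerivAt (fun s => f x s z) (fderiv ℝ (unc f) (x, y, z) E2) y := by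
  have h1 : HasDerivAt (fun s : ℝ => (x, s, z) : ℝ → ℝ × ℝ × ℝ) E2 y :=
    (hasDerivAt_const y x).prodMk ((hasDerivAt_id y).prodMk (hasDerivAt_const y z))
  exact ((hf.differentiable (by simp) (x, y, z)).hasFDerivAt).comp_hasDerivAt y h1

theorem hasDerivAt_sliceZ (hf : Smooth3 f) (x y z : ℝ) :
    HasDerivAt (fun s => f x y s) (fderiv ℝ (unc f) (x, y, z) E3) z := by
  have h1 : HasDerivAt (fun s : ℝ => (x, y, s) : ℝ → ℝ × ℝ × ℝ) E3 z :=
    (hasDerivAt_const z x).prodMk ((hasDerivAt_const z y).prodMk (hasDerivAt_id z))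
  exact ((hf.differentiable (by simp) (x, y, z)).hasFDerivAt).comp_hasDerivAt z h1

theorem pX_eq (hf : Smooth3 f) (x y z : ℝ) :
    pX f x y z = fderiv ℝ (unc f) (x, y, z) E1 := (hasDerivAt_sliceX hf x y z).deriv
theorem pY_eq (hf : Smooth3 f) (x y z : ℝ) :
    pY f x y z = fderiv ℝ (unc f) (x, y, z) E2 := (hasDerivAt_sliceY hf x y z).deriv
theorem pZ_eq (hf : Smooth3 f) (x y z : ℝ) :
    pZ f x y z = fderiv ℝ (unc f) (x, y, z) E3 := (hasDerivAt_sliceZ hf x y z).deriv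

/-- derivatives of slices, restated with pX/pY/pZ values -/
theorem hasDerivAt_sliceX' (hf : Smooth3 f) (x y z : ℝ) :
    HasDerivAt (fun s => f s y z) (pX f x y z) x := by
  rw [pX_eq hf]; exact hasDerivAt_sliceX hf x y z
theorem hasDerivAt_sliceY' (hf : Smooth3 f) (x y z : ℝ) :
    HasDerivAt (fun s => f x s z) (pY f x y z) y := by
  rw [pY_eq hf]; exact hasDerivAt_sliceY hf x y z
theorem hasDerivAt_sliceZ' (hf : Smooth3 f) (x y z : ℝ) :
    HasDerivAt (fun s => f x y s) (pZ f x y z) z := by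
  rw [pZ_eq hf]; exact hasDerivAt_sliceZ hf x y z

theorem smooth_fderiv_apply (hf : Smooth3 f) (v : ℝ × ℝ × ℝ) :
    ContDiff ℝ (⊤ : ℕ∞) (fun p : ℝ × ℝ × ℝ => fderiv ℝ (unc f) p v) :=
  (hf.fderiv_right ((by simp))).clm_apply contDiff_const

theorem smooth3_pX (hf : Smooth3 f) : Smooth3 (pX f) := by
  have h := smooth_fderiv_apply hf E1
  have e : (fun p : ℝ × ℝ × ℝ => pX f p.1 p.2.1 p.2.2) =
      (fun p : ℝ × ℝ × ℝ => fderiv ℝ (unc f) p E1) := by funext p; rw [pX_eq hf]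
  rw [Smooth3, e]; exact h

theorem smooth3_pY (hf : Smooth3 f) : Smooth3 (pY f) := by
  have h := smooth_fderiv_apply hf E2
  have e : (fun p : ℝ × ℝ × ℝ => pY f p.1 p.2.1 p.2.2) =
      (fun p : ℝ × ℝ × ℝ => fderiv ℝ (unc f) p E2) := by funext p; rw [pY_eq hf]
  rw [Smooth3, e]; exact h

theorem smooth3_pZ (hf : Smooth3 f) : Smooth3 (pZ f) := by
  have h := smooth_fderiv_apply hf E3
  have e : (fun p : ℝ × ℝ × ℝ => pZ f p.1 p.2.1 p.2.2) =
      (fun p : ℝ × ℝ × ℝ => fderiv ℝ (unc f) p E3) := by funext p; rw [pZ_eq hf]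
  rw [Smooth3, e]; exact h

theorem snd_symm (hf : Smooth3 f) (q v w : ℝ × ℝ × ℝ) :
    fderiv ℝ (fderiv ℝ (unc f)) q v w = fderiv ℝ (fderiv ℝ (unc f)) q w v :=
  second_derivative_symmetric (f' := fderiv ℝ (unc f))
    (fun p => ((hf.differentiable (by simp)) p).hasFDerivAt)
    ((((hf.fderiv_right (m := (⊤ : ℕ∞)) (by simp)).differentiable (by simp)) q).hasFDerivAt) v w

theorem fderiv_fderiv_apply (hf : Smooth3 f) (q : ℝ × ℝ × ℝ) (v w : ℝ × ℝ × ℝ) :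
    fderiv ℝ (fun p : ℝ × ℝ × ℝ => fderiv ℝ (unc f) p v) q w
      = fderiv ℝ (fderiv ℝ (unc f)) q w v := by
  have hc : HasFDerivAt (fderiv ℝ (unc f)) (fderiv ℝ (fderiv ℝ (unc f)) q) q :=
    (((hf.fderiv_right (m := (⊤ : ℕ∞)) (by simp)).differentiable (by simp)) q).hasFDerivAt
  have h := hc.clm_apply (hasFDerivAt_const v q)
  rw [h.fderiv]; simp

theorem unc_pd (hf : Smooth3 f) (v : ℝ × ℝ × ℝ)
    (hv : (fun x y z : ℝ => fderiv ℝ (unc f) (x,y,z) v) = g) :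
    unc g = fun p => fderiv ℝ (unc f) p v := by
  funext p; rw [unc, ← hv]

/-- generic second-derivative commutation -/
theorem pZX_comm (hf : Smooth3 f) (x y z : ℝ) : pZ (pX f) x y z = pX (pZ f) x y z := by
  have e1 : unc (pX f) = fun p => fderiv ℝ (unc f) p E1 := by
    funext p; rw [unc]; exact (pX_eq hf _ _ _)
  have e3 : unc (pZ f) = fun p => fderiv ℝ (unc f) p E3 := by
    funext p; rw [unc]; exact (pZ_eq hf _ _ _)
  rw [pZ_eq (smooth3_pX hf), pX_eq (smooth3_pZ hf), e1, e3,
    fderiv_fderiv_apply hf _ E1 E3, fderiv_fderiv_apply hf _ E3 E1, snd_symm hf]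

theorem pZY_comm (hf : Smooth3 f) (x y z : ℝ) : pZ (pY f) x y z = pY (pZ f) x y z := by
  have e2 : unc (pY f) = fun p => fderiv ℝ (unc f) p E2 := by
    funext p; rw [unc]; exact (pY_eq hf _ _ _)
  have e3 : unc (pZ f) = fun p => fderiv ℝ (unc f) p E3 := by
    funext p; rw [unc]; exact (pZ_eq hf _ _ _)
  rw [pZ_eq (smooth3_pY hf), pY_eq (smooth3_pZ hf), e2, e3,
    fderiv_fderiv_apply hf _ E2 E3, fderiv_fderiv_apply hf _ E3 E2, snd_symm hf]

theorem pYX_comm (hf : Smooth3 f) (x y z : ℝ) : pY (pX f) x y z = pX (pY f) x y z := by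
  have e1 : unc (pX f) = fun p => fderiv ℝ (unc f) p E1 := by
    funext p; rw [unc]; exact (pX_eq hf _ _ _)
  have e2 : unc (pY f) = fun p => fderiv ℝ (unc f) p E2 := by
    funext p; rw [unc]; exact (pY_eq hf _ _ _)
  rw [pY_eq (smooth3_pX hf), pX_eq (smooth3_pY hf), e1, e2,
    fderiv_fderiv_apply hf _ E1 E2, fderiv_fderiv_apply hf _ E2 E1, snd_symm hf]

theorem smooth3_continuous (hf : Smooth3 f) : Continuous (unc f) := hf.continuous
theorem cu (hf : Smooth3 f) : Continuous (unc f) := hf.continuous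

theorem smooth3_neg (hf : Smooth3 f) : Smooth3 (fun a b c => -(f a b c)) := hf.neg

theorem smooth3_sub (hf : Smooth3 f) (hg : Smooth3 g) :
    Smooth3 (fun a b c => f a b c - g a b c) := hf.sub hg

theorem smooth3_om {u v : ℝ → ℝ → ℝ → ℝ} (hu : Smooth3 u) (hv : Smooth3 v) :
    Smooth3 (om u v) := smooth3_sub (smooth3_pX hv) (smooth3_pY hu)

/-- periodicity preserved by partial derivatives -/
theorem perXY_pX {L : ℝ} (hf : PerXY L f) : PerXY L (pX f) := by
  intro x y z
  constructor
  · have e : (fun s => f (s + L) y z) = (fun s => f s y z) := by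
      funext s; exact (hf s y z).1
    have := deriv_comp_add_const (fun s => f s y z) L x
    simp only [pX, ← this, e]
  · have : (fun s => f s (y + L) z) = fun s => f s y z := by
      funext s; exact (hf s y z).2
    simp only [pX, this]

theorem perXY_pY {L : ℝ} (hf : PerXY L f) : PerXY L (pY f) := by
  intro x y z
  constructor
  · have : (fun s => f (x + L) s z) = fun s => f x s z := by
      funext s; exact (hf x s z).1
    simp only [pY, this]
  · have e : (fun s => f x (s + L) z) = (fun s => f x s z) := by
      funext s; exact (hf x s z).2
    have := deriv_comp_add_const (fun s => f x s z) L y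
    simp only [pY, ← this, e]

theorem perXY_pZ {L : ℝ} (hf : PerXY L f) : PerXY L (pZ f) := by
  intro x y z
  constructor
  · have : (fun s => f (x + L) y s) = fun s => f x y s := by
      funext s; exact (hf x y s).1
    simp only [pZ, this]
  · have : (fun s => f x (y + L) s) = fun s => f x y s := by
      funext s; exact (hf x y s).2
    simp only [pZ, this]

theorem perXY_om {L : ℝ} {u v : ℝ → ℝ → ℝ → ℝ} (hu : PerXY L u) (hv : PerXY L v) :
    PerXY L (om u v) := by
  intro x y z
  exact ⟨by rw [om, om, ((perXY_pX hv) x y z).1, ((perXY_pY hu) x y z).1],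
    by rw [om, om, ((perXY_pX hv) x y z).2, ((perXY_pY hu) x y z).2]⟩


/-! ### Integral machinery -/

def JJ (L H : ℝ) (F : ℝ → ℝ → ℝ → ℝ) : ℝ := ∫ p in Omega L H, F p.1 p.2.1 p.2.2

def S (L : ℝ) : Set ℝ := Set.Icc 0 L
def T (H : ℝ) : Set ℝ := Set.Icc 0 H

theorem compact_box {L H : ℝ} : IsCompact (S L ×ˢ (S L ×ˢ T H)) :=
  isCompact_Icc.prod (isCompact_Icc.prod isCompact_Icc)

theorem intOn {F : ℝ × ℝ × ℝ → ℝ} (h : Continuous F) {s : Set (ℝ × ℝ × ℝ)}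
    (hs : IsCompact s) : IntegrableOn F s volume :=
  h.continuousOn.integrableOn_compact hs

variable {L H : ℝ}

theorem J_z {F : ℝ × ℝ × ℝ → ℝ} (h : Continuous F) :
    ∫ p in S L ×ˢ (S L ×ˢ T H), F p
      = ∫ x in S L, ∫ y in S L, ∫ z in T H, F (x, y, z) := by
  rw [Measure.volume_eq_prod]
  rw [setIntegral_prod _ (by rw [← Measure.volume_eq_prod]; exact intOn h compact_box)]
  congr 1
  funext x
  have hc : Continuous (fun q : ℝ × ℝ => F (x, q)) := h.comp (Continuous.prodMk_right x)
  have hint : IntegrableOn (fun q : ℝ × ℝ => F (x, q)) (S L ×ˢ T H) volume :=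
    hc.continuousOn.integrableOn_compact (isCompact_Icc.prod isCompact_Icc)
  rw [Measure.volume_eq_prod]
  rw [setIntegral_prod _ (by rw [← Measure.volume_eq_prod]; exact hint)]

theorem J_y {F : ℝ × ℝ × ℝ → ℝ} (h : Continuous F) :
    ∫ p in S L ×ˢ (S L ×ˢ T H), F p
      = ∫ x in S L, ∫ z in T H, ∫ y in S L, F (x, y, z) := by
  rw [J_z h]
  congr 1
  funext x
  apply integral_integral_swap
  rw [Measure.prod_restrict]
  have hc : Continuous (fun q : ℝ × ℝ => F (x, q)) := h.comp (Continuous.prodMk_right x)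
  exact hc.continuousOn.integrableOn_compact (isCompact_Icc.prod isCompact_Icc)

theorem J_x {F : ℝ × ℝ × ℝ → ℝ} (h : Continuous F) :
    ∫ p in S L ×ˢ (S L ×ˢ T H), F p
      = ∫ q in S L ×ˢ T H, ∫ x in S L, F (x, q.1, q.2) := by
  rw [Measure.volume_eq_prod]
  rw [setIntegral_prod _ (by rw [← Measure.volume_eq_prod]; exact intOn h compact_box)]
  have hint : Integrable (Function.uncurry fun (x : ℝ) (q : ℝ × ℝ) => F (x, q.1, q.2))
      ((volume.restrict (S L)).prod ((volume : Measure (ℝ × ℝ)).restrict (S L ×ˢ T H))) := by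
    rw [Measure.prod_restrict, ← Measure.volume_eq_prod]
    exact intOn h compact_box
  have hsw := integral_integral_swap (μ := volume.restrict (S L))
    (ν := (volume : Measure (ℝ × ℝ)).restrict (S L ×ˢ T H))
    (f := fun x q => F (x, q.1, q.2)) hint
  rw [← hsw]

theorem omega_eq : Omega L H = S L ×ˢ (S L ×ˢ T H) := rfl

theorem J_congr {F G : ℝ → ℝ → ℝ → ℝ} (h : ∀ x y z, F x y z = G x y z) :
    JJ L H F = JJ L H G := by
  unfold JJ; congr 1; funext p; rw [h]

theorem J_add {F G : ℝ → ℝ → ℝ → ℝ} (hF : Continuous (unc F)) (hG : Continuous (unc G)) :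
    JJ L H (fun x y z => F x y z + G x y z) = JJ L H F + JJ L H G :=
  integral_add (intOn hF compact_box) (intOn hG compact_box)

theorem J_sub {F G : ℝ → ℝ → ℝ → ℝ} (hF : Continuous (unc F)) (hG : Continuous (unc G)) :
    JJ L H (fun x y z => F x y z - G x y z) = JJ L H F - JJ L H G :=
  integral_sub (intOn hF compact_box) (intOn hG compact_box)

theorem J_mulc {F : ℝ → ℝ → ℝ → ℝ} (c : ℝ) :
    JJ L H (fun x y z => c * F x y z) = c * JJ L H F :=
  integral_const_mul c _

theorem J_nonneg {F : ℝ → ℝ → ℝ → ℝ} (h : ∀ x y z, 0 ≤ F x y z) : 0 ≤ JJ L H F :=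
  setIntegral_nonneg (measurableSet_Icc.prod (measurableSet_Icc.prod measurableSet_Icc))
    (fun p _ => h p.1 p.2.1 p.2.2)

/-- continuity of slice in z -/
theorem contSliceZ {F : ℝ → ℝ → ℝ → ℝ} (h : Continuous (unc F)) (x y : ℝ) :
    Continuous (fun z => F x y z) :=
  h.comp (continuous_const.prodMk (continuous_const.prodMk continuous_id))
theorem contSliceY {F : ℝ → ℝ → ℝ → ℝ} (h : Continuous (unc F)) (x z : ℝ) :
    Continuous (fun y => F x y z) :=
  h.comp (continuous_const.prodMk (continuous_id.prodMk continuous_const))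
theorem contSliceX {F : ℝ → ℝ → ℝ → ℝ} (h : Continuous (unc F)) (y z : ℝ) :
    Continuous (fun x => F x y z) :=
  h.comp (continuous_id.prodMk (continuous_const.prodMk continuous_const))

/-- 1-D fundamental theorem on an Icc -/
theorem integral_deriv_Icc {c : ℝ} (hc : 0 ≤ c) {φ φ' : ℝ → ℝ}
    (h : ∀ t, HasDerivAt φ (φ' t) t) (hφ' : Continuous φ') :
    ∫ t in Set.Icc 0 c, φ' t = φ c - φ 0 := by
  rw [integral_Icc_eq_integral_Ioc, ← intervalIntegral.integral_of_le hc]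
  exact intervalIntegral.integral_eq_sub_of_hasDerivAt (fun t _ => h t)
    (hφ'.intervalIntegrable _ _)

/-- Integration by parts in z over the box -/
theorem ibpZ (hH : 0 ≤ H) {f g : ℝ → ℝ → ℝ → ℝ} (hf : Smooth3 f) (hg : Smooth3 g)
    (hbd : ∀ x y, f x y 0 * g x y 0 = f x y H * g x y H) :
    JJ L H (fun x y z => pZ f x y z * g x y z + f x y z * pZ g x y z) = 0 := by
  have hC : Continuous (unc (fun x y z => pZ f x y z * g x y z + f x y z * pZ g x y z)) :=
    (((smooth3_pZ hf).continuous.mul hg.continuous).add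
      (hf.continuous.mul (smooth3_pZ hg).continuous))
  rw [JJ, omega_eq]
  rw [show (fun p : ℝ × ℝ × ℝ =>
      (fun x y z => pZ f x y z * g x y z + f x y z * pZ g x y z) p.1 p.2.1 p.2.2)
    = unc (fun x y z => pZ f x y z * g x y z + f x y z * pZ g x y z) from rfl, J_z hC]
  have inner : ∀ x y : ℝ,
      (∫ z in T H, unc (fun x y z => pZ f x y z * g x y z + f x y z * pZ g x y z) (x, y, z))
        = 0 := by
    intro x y
    have hd : ∀ t, HasDerivAt (fun s => f x y s * g x y s)
        (pZ f x y t * g x y t + f x y t * pZ g x y t) t :=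
      fun t => (hasDerivAt_sliceZ' hf x y t).mul (hasDerivAt_sliceZ' hg x y t)
    have hcont : Continuous (fun t => pZ f x y t * g x y t + f x y t * pZ g x y t) :=
      ((contSliceZ (cu (smooth3_pZ hf)) x y).mul (contSliceZ (cu hg) x y)).add
        ((contSliceZ (cu hf) x y).mul (contSliceZ (cu (smooth3_pZ hg)) x y))
    have := integral_deriv_Icc hH hd hcont
    rw [show (T H) = Set.Icc (0:ℝ) H from rfl]
    simpa [unc, hbd x y] using this
  simp only [inner, integral_zero]

/-- Integration by parts in y over the box -/
theorem ibpY (hL : 0 ≤ L) {f g : ℝ → ℝ → ℝ → ℝ} (hf : Smooth3 f) (hg : Smooth3 g)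
    (hper : ∀ x y z, f x (y + L) z * g x (y + L) z = f x y z * g x y z) :
    JJ L H (fun x y z => pY f x y z * g x y z + f x y z * pY g x y z) = 0 := by
  have hC : Continuous (unc (fun x y z => pY f x y z * g x y z + f x y z * pY g x y z)) :=
    (((smooth3_pY hf).continuous.mul hg.continuous).add
      (hf.continuous.mul (smooth3_pY hg).continuous))
  rw [JJ, omega_eq]
  rw [show (fun p : ℝ × ℝ × ℝ =>
      (fun x y z => pY f x y z * g x y z + f x y z * pY g x y z) p.1 p.2.1 p.2.2)
    = unc (fun x y z => pY f x y z * g x y z + f x y z * pY g x y z) from rfl, J_y hC]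
  have inner : ∀ x z : ℝ,
      (∫ y in S L, unc (fun x y z => pY f x y z * g x y z + f x y z * pY g x y z) (x, y, z))
        = 0 := by
    intro x z
    have hd : ∀ t, HasDerivAt (fun s => f x s z * g x s z)
        (pY f x t z * g x t z + f x t z * pY g x t z) t :=
      fun t => (hasDerivAt_sliceY' hf x t z).mul (hasDerivAt_sliceY' hg x t z)
    have hcont : Continuous (fun t => pY f x t z * g x t z + f x t z * pY g x t z) :=
      ((contSliceY (cu (smooth3_pY hf)) x z).mul (contSliceY (cu hg) x z)).add
        ((contSliceY (cu hf) x z).mul (contSliceY (cu (smooth3_pY hg)) x z))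
    have hfin := integral_deriv_Icc hL hd hcont
    have h0 := hper x 0 z
    rw [zero_add] at h0
    rw [show (S L) = Set.Icc (0:ℝ) L from rfl]
    simpa [unc, h0] using hfin
  simp only [inner, integral_zero]

/-- Integration by parts in x over the box -/
theorem ibpX (hL : 0 ≤ L) {f g : ℝ → ℝ → ℝ → ℝ} (hf : Smooth3 f) (hg : Smooth3 g)
    (hper : ∀ x y z, f (x + L) y z * g (x + L) y z = f x y z * g x y z) :
    JJ L H (fun x y z => pX f x y z * g x y z + f x y z * pX g x y z) = 0 := by
  have hC : Continuous (unc (fun x y z => pX f x y z * g x y z + f x y z * pX g x y z)) :=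
    (((smooth3_pX hf).continuous.mul hg.continuous).add
      (hf.continuous.mul (smooth3_pX hg).continuous))
  rw [JJ, omega_eq]
  rw [show (fun p : ℝ × ℝ × ℝ =>
      (fun x y z => pX f x y z * g x y z + f x y z * pX g x y z) p.1 p.2.1 p.2.2)
    = unc (fun x y z => pX f x y z * g x y z + f x y z * pX g x y z) from rfl, J_x hC]
  have inner : ∀ q : ℝ × ℝ,
      (∫ x in S L, unc (fun x y z => pX f x y z * g x y z + f x y z * pX g x y z) (x, q.1, q.2))
        = 0 := by
    intro q
    obtain ⟨y, z⟩ := q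
    have hd : ∀ t, HasDerivAt (fun s => f s y z * g s y z)
        (pX f t y z * g t y z + f t y z * pX g t y z) t :=
      fun t => (hasDerivAt_sliceX' hf t y z).mul (hasDerivAt_sliceX' hg t y z)
    have hcont : Continuous (fun t => pX f t y z * g t y z + f t y z * pX g t y z) :=
      ((contSliceX (cu (smooth3_pX hf)) y z).mul (contSliceX (cu hg) y z)).add
        ((contSliceX (cu hf) y z).mul (contSliceX (cu (smooth3_pX hg)) y z))
    have hfin := integral_deriv_Icc hL hd hcont
    have h0 := hper 0 y z
    rw [zero_add] at h0
    rw [show (S L) = Set.Icc (0:ℝ) L from rfl]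
    simpa [unc, h0] using hfin
  simp only [inner, integral_zero]



theorem J_combo {F1 F2 F3 F4 F5 F6 F7 F8 : ℝ → ℝ → ℝ → ℝ} (a2 a4 a5 a6 a7 a8 : ℝ)
    (h1 : Continuous (unc F1)) (h2 : Continuous (unc F2)) (h3 : Continuous (unc F3))
    (h4 : Continuous (unc F4)) (h5 : Continuous (unc F5)) (h6 : Continuous (unc F6))
    (h7 : Continuous (unc F7)) (h8 : Continuous (unc F8)) :
    JJ L H (fun x y z => F1 x y z + (a2 * F2 x y z + (F3 x y z + (a4 * F4 x y z
      + (a5 * F5 x y z + (a6 * F6 x y z + (a7 * F7 x y z + a8 * F8 x y z)))))))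
    = JJ L H F1 + (a2 * JJ L H F2 + (JJ L H F3 + (a4 * JJ L H F4
      + (a5 * JJ L H F5 + (a6 * JJ L H F6 + (a7 * JJ L H F7 + a8 * JJ L H F8)))))) := by
  have H8 : Continuous (unc (fun x y z => a8 * F8 x y z)) := continuous_const.mul h8
  have H7 : Continuous (unc (fun x y z => a7 * F7 x y z)) := continuous_const.mul h7
  have H6 : Continuous (unc (fun x y z => a6 * F6 x y z)) := continuous_const.mul h6
  have H5 : Continuous (unc (fun x y z => a5 * F5 x y z)) := continuous_const.mul h5
  have H4 : Continuous (unc (fun x y z => a4 * F4 x y z)) := continuous_const.mul h4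
  have H2 : Continuous (unc (fun x y z => a2 * F2 x y z)) := continuous_const.mul h2
  have H78 : Continuous (unc (fun x y z => a7 * F7 x y z + a8 * F8 x y z)) := H7.add H8
  have H678 : Continuous (unc (fun x y z => a6 * F6 x y z
      + (a7 * F7 x y z + a8 * F8 x y z))) := H6.add H78
  have H5678 : Continuous (unc (fun x y z => a5 * F5 x y z + (a6 * F6 x y z
      + (a7 * F7 x y z + a8 * F8 x y z)))) := H5.add H678
  have H45678 : Continuous (unc (fun x y z => a4 * F4 x y z + (a5 * F5 x y z
      + (a6 * F6 x y z + (a7 * F7 x y z + a8 * F8 x y z))))) := H4.add H5678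
  have H345678 : Continuous (unc (fun x y z => F3 x y z + (a4 * F4 x y z + (a5 * F5 x y z
      + (a6 * F6 x y z + (a7 * F7 x y z + a8 * F8 x y z)))))) := h3.add H45678
  have H2345678 : Continuous (unc (fun x y z => a2 * F2 x y z + (F3 x y z
      + (a4 * F4 x y z + (a5 * F5 x y z + (a6 * F6 x y z
      + (a7 * F7 x y z + a8 * F8 x y z))))))) := H2.add H345678
  rw [J_add h1 H2345678, J_add H2 H345678, J_add h3 H45678, J_add H4 H5678,
    J_add H5 H678, J_add H6 H78, J_add H7 H8,
    J_mulc a2, J_mulc a4, J_mulc a5, J_mulc a6, J_mulc a7, J_mulc a8]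

/-! ### integrand definitions -/

theorem pZ_neg (f : ℝ → ℝ → ℝ → ℝ) (x y z : ℝ) :
    pZ (fun a b c => -(f a b c)) x y z = -(pZ f x y z) := by
  simp [pZ, deriv.neg]

theorem pY_neg (f : ℝ → ℝ → ℝ → ℝ) (x y z : ℝ) :
    pY (fun a b c => -(f a b c)) x y z = -(pY f x y z) := by
  simp [pY, deriv.neg]

section MainDefs
variable (u v w : ℝ → ℝ → ℝ → ℝ) (ε δ₀ : ℝ)

def fA : ℝ → ℝ → ℝ → ℝ := fun x y z => (pX (om u v) x y z)^2 + (pY (om u v) x y z)^2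
def fB : ℝ → ℝ → ℝ → ℝ := fun x y z => (pY (pZ u) x y z)^2 + (pX (pZ v) x y z)^2
def fC : ℝ → ℝ → ℝ → ℝ := fun x y z =>
  (pZ (pZ u) x y z)^2 + (pZ (pZ v) x y z)^2 + ε^2*(1-δ₀)*(pZ (pZ w) x y z)^2
def fC' : ℝ → ℝ → ℝ → ℝ := fun x y z =>
  (pZ (pZ u) x y z)^2 + (pZ (pZ v) x y z)^2
    + (1-δ₀)*(pX (pZ u) x y z + pY (pZ v) x y z)^2
def fD : ℝ → ℝ → ℝ → ℝ := fun x y z => (pY (pZ u) x y z - pX (pZ v) x y z)^2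
def fE : ℝ → ℝ → ℝ → ℝ := fun x y z => (pX (pZ u) x y z - pY (pZ v) x y z)^2
def fFL : ℝ → ℝ → ℝ → ℝ := fun x y z =>
  (pY (om u v) x y z - pZ (pZ u) x y z)^2
    + (-(pZ (pZ v) x y z) - pX (om u v) x y z)^2
    + (pX (pZ u) x y z + pY (pZ v) x y z)^2
def fP1 : ℝ → ℝ → ℝ → ℝ := fun x y z =>
  pY (om u v) x y z * pZ (pZ u) x y z
    - (pX (pZ v) x y z - pY (pZ u) x y z) * pY (pZ u) x y z
def fP2 : ℝ → ℝ → ℝ → ℝ := fun x y z =>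
  pX (om u v) x y z * pZ (pZ v) x y z
    - (pX (pZ v) x y z - pY (pZ u) x y z) * pX (pZ v) x y z
def fP3 : ℝ → ℝ → ℝ → ℝ := fun x y z =>
  pY (pZ u) x y z * pX (pZ v) x y z - pX (pZ u) x y z * pY (pZ v) x y z

end MainDefs
end Aux

open Aux

/-- Lemma 3 (lemma1): lower bound for ∫|curl ζ|² in terms of second mixed derivatives. -/
theorem lemma1 (L H : ℝ) (hL : 0 < L) (hH : 0 < H) (ε : ℝ) (hε : 0 < ε)
    (u v w : ℝ → ℝ → ℝ → ℝ)
    (hu : Smooth3 u) (hv : Smooth3 v) (hw : Smooth3 w)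
    (hup : PerXY L u) (hvp : PerXY L v) (hwp : PerXY L w)
    (hbc : ∀ x y : ℝ, pZ u x y 0 = 0 ∧ pZ u x y H = 0 ∧ pZ v x y 0 = 0 ∧ pZ v x y H = 0
        ∧ w x y 0 = 0 ∧ w x y H = 0)
    (hdiv : ∀ x y z : ℝ, ε * pZ w x y z = -(pX u x y z + pY v x y z))
    (δ₀ : ℝ) (hδ₀ : 0 < δ₀) (hδ₀' : δ₀ < 1) :
    (∫ p in Omega L H,
        (curl1 (fun a b c => -(pZ v a b c)) (pZ u) (om u v) p.1 p.2.1 p.2.2)^2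
        + (curl2 (fun a b c => -(pZ v a b c)) (pZ u) (om u v) p.1 p.2.1 p.2.2)^2
        + (curl3 (fun a b c => -(pZ v a b c)) (pZ u) (om u v) p.1 p.2.1 p.2.2)^2)
      ≥ min 1 (2 * (1 - δ₀)) *
          (∫ p in Omega L H, (pX (om u v) p.1 p.2.1 p.2.2)^2 + (pY (om u v) p.1 p.2.1 p.2.2)^2)
        + 2 * δ₀ *
          (∫ p in Omega L H, (pY (pZ u) p.1 p.2.1 p.2.2)^2 + (pX (pZ v) p.1 p.2.1 p.2.2)^2)
        + ∫ p in Omega L H, (pZ (pZ u) p.1 p.2.1 p.2.2)^2 + (pZ (pZ v) p.1 p.2.1 p.2.2)^2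
            + ε^2 * (1 - δ₀) * (pZ (pZ w) p.1 p.2.1 p.2.2)^2 := by
  have hH0 : (0:ℝ) ≤ H := hH.le
  have hL0 : (0:ℝ) ≤ L := hL.le
  -- smoothness of everything
  have hω : Smooth3 (om u v) := smooth3_om hu hv
  have hωp : PerXY L (om u v) := perXY_om hup hvp
  -- continuity atoms
  have c01 : Continuous (fun p : ℝ × ℝ × ℝ => pX (om u v) p.1 p.2.1 p.2.2) :=
    (smooth3_pX hω).continuous
  have c02 : Continuous (fun p : ℝ × ℝ × ℝ => pY (om u v) p.1 p.2.1 p.2.2) :=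
    (smooth3_pY hω).continuous
  have c03 : Continuous (fun p : ℝ × ℝ × ℝ => pZ (om u v) p.1 p.2.1 p.2.2) :=
    (smooth3_pZ hω).continuous
  have c04 : Continuous (fun p : ℝ × ℝ × ℝ => pZ (pX (om u v)) p.1 p.2.1 p.2.2) :=
    (smooth3_pZ (smooth3_pX hω)).continuous
  have c05 : Continuous (fun p : ℝ × ℝ × ℝ => pZ (pY (om u v)) p.1 p.2.1 p.2.2) :=
    (smooth3_pZ (smooth3_pY hω)).continuous
  have c06 : Continuous (fun p : ℝ × ℝ × ℝ => pY (pZ (om u v)) p.1 p.2.1 p.2.2) :=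
    (smooth3_pY (smooth3_pZ hω)).continuous
  have c07 : Continuous (fun p : ℝ × ℝ × ℝ => pX (pZ (om u v)) p.1 p.2.1 p.2.2) :=
    (smooth3_pX (smooth3_pZ hω)).continuous
  have c08 : Continuous (fun p : ℝ × ℝ × ℝ => pZ u p.1 p.2.1 p.2.2) :=
    (smooth3_pZ hu).continuous
  have c09 : Continuous (fun p : ℝ × ℝ × ℝ => pZ v p.1 p.2.1 p.2.2) :=
    (smooth3_pZ hv).continuous
  have c10 : Continuous (fun p : ℝ × ℝ × ℝ => pY (pZ u) p.1 p.2.1 p.2.2) :=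
    (smooth3_pY (smooth3_pZ hu)).continuous
  have c11 : Continuous (fun p : ℝ × ℝ × ℝ => pX (pZ v) p.1 p.2.1 p.2.2) :=
    (smooth3_pX (smooth3_pZ hv)).continuous
  have c12 : Continuous (fun p : ℝ × ℝ × ℝ => pX (pZ u) p.1 p.2.1 p.2.2) :=
    (smooth3_pX (smooth3_pZ hu)).continuous
  have c13 : Continuous (fun p : ℝ × ℝ × ℝ => pY (pZ v) p.1 p.2.1 p.2.2) :=
    (smooth3_pY (smooth3_pZ hv)).continuous
  have c14 : Continuous (fun p : ℝ × ℝ × ℝ => pZ (pZ u) p.1 p.2.1 p.2.2) :=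
    (smooth3_pZ (smooth3_pZ hu)).continuous
  have c15 : Continuous (fun p : ℝ × ℝ × ℝ => pZ (pZ v) p.1 p.2.1 p.2.2) :=
    (smooth3_pZ (smooth3_pZ hv)).continuous
  have c16 : Continuous (fun p : ℝ × ℝ × ℝ => pZ (pZ w) p.1 p.2.1 p.2.2) :=
    (smooth3_pZ (smooth3_pZ hw)).continuous
  have c17 : Continuous (fun p : ℝ × ℝ × ℝ => pY (pX (pZ v)) p.1 p.2.1 p.2.2) :=
    (smooth3_pY (smooth3_pX (smooth3_pZ hv))).continuous
  have c18 : Continuous (fun p : ℝ × ℝ × ℝ => pX (pY (pZ v)) p.1 p.2.1 p.2.2) :=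
    (smooth3_pX (smooth3_pY (smooth3_pZ hv))).continuous
  -- pointwise identities
  have eωz : ∀ x y z : ℝ, pZ (om u v) x y z = pX (pZ v) x y z - pY (pZ u) x y z := by
    intro x y z
    have h1 : HasDerivAt (fun s => pX v x y s - pY u x y s)
        (pZ (pX v) x y z - pZ (pY u) x y z) z :=
      (hasDerivAt_sliceZ' (smooth3_pX hv) x y z).sub (hasDerivAt_sliceZ' (smooth3_pY hu) x y z)
    have h2 : pZ (om u v) x y z = pZ (pX v) x y z - pZ (pY u) x y z := h1.deriv
    rw [h2, pZX_comm hv, pZY_comm hu]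
  have eW : ∀ x y z : ℝ, ε * pZ (pZ w) x y z
      = -(pX (pZ u) x y z + pY (pZ v) x y z) := by
    intro x y z
    have h1 : HasDerivAt (fun s => ε * pZ w x y s) (ε * pZ (pZ w) x y z) z :=
      (hasDerivAt_sliceZ' (smooth3_pZ hw) x y z).const_mul ε
    have he : (fun s => ε * pZ w x y s) = fun s => -(pX u x y s + pY v x y s) :=
      funext (fun s => hdiv x y s)
    rw [he] at h1
    have h2 : HasDerivAt (fun s => -(pX u x y s + pY v x y s))
        (-(pZ (pX u) x y z + pZ (pY v) x y z)) z :=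
      ((hasDerivAt_sliceZ' (smooth3_pX hu) x y z).add
        (hasDerivAt_sliceZ' (smooth3_pY hv) x y z)).neg
    have h3 := h1.unique h2
    rw [h3, pZX_comm hu, pZY_comm hv]
  -- IBP identities
  have hQ1 : JJ L H (fun x y z => pZ (pY (om u v)) x y z * pZ u x y z
      + pY (om u v) x y z * pZ (pZ u) x y z) = 0 := by
    refine ibpZ hH0 (smooth3_pY hω) (smooth3_pZ hu) (fun x y => ?_)
    rw [(hbc x y).1, (hbc x y).2.1, mul_zero, mul_zero]
  have hQ2 : JJ L H (fun x y z => pY (pZ (om u v)) x y z * pZ u x y z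
      + pZ (om u v) x y z * pY (pZ u) x y z) = 0 := by
    refine ibpY hL0 (smooth3_pZ hω) (smooth3_pZ hu) (fun x y z => ?_)
    rw [(perXY_pZ hωp x y z).2, (perXY_pZ hup x y z).2]
  have hI1 : JJ L H (fP1 u v) = 0 := by
    have e := J_congr (L := L) (H := H) (F := fP1 u v)
      (G := fun x y z => (pZ (pY (om u v)) x y z * pZ u x y z
          + pY (om u v) x y z * pZ (pZ u) x y z)
        - (pY (pZ (om u v)) x y z * pZ u x y z + pZ (om u v) x y z * pY (pZ u) x y z))
      (fun x y z => by simp only [fP1, pZY_comm hω, eωz]; ring)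
    rw [e, J_sub (by unfold unc; fun_prop) (by unfold unc; fun_prop), hQ1, hQ2,
      sub_zero]
  have hQ3 : JJ L H (fun x y z => pZ (pX (om u v)) x y z * pZ v x y z
      + pX (om u v) x y z * pZ (pZ v) x y z) = 0 := by
    refine ibpZ hH0 (smooth3_pX hω) (smooth3_pZ hv) (fun x y => ?_)
    rw [(hbc x y).2.2.1, (hbc x y).2.2.2.1, mul_zero, mul_zero]
  have hQ4 : JJ L H (fun x y z => pX (pZ (om u v)) x y z * pZ v x y z
      + pZ (om u v) x y z * pX (pZ v) x y z) = 0 := by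
    refine ibpX hL0 (smooth3_pZ hω) (smooth3_pZ hv) (fun x y z => ?_)
    rw [(perXY_pZ hωp x y z).1, (perXY_pZ hvp x y z).1]
  have hI2 : JJ L H (fP2 u v) = 0 := by
    have e := J_congr (L := L) (H := H) (F := fP2 u v)
      (G := fun x y z => (pZ (pX (om u v)) x y z * pZ v x y z
          + pX (om u v) x y z * pZ (pZ v) x y z)
        - (pX (pZ (om u v)) x y z * pZ v x y z + pZ (om u v) x y z * pX (pZ v) x y z))
      (fun x y z => by simp only [fP2, pZX_comm hω, eωz]; ring)
    rw [e, J_sub (by unfold unc; fun_prop) (by unfold unc; fun_prop), hQ3, hQ4,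
      sub_zero]
  have hQ5 : JJ L H (fun x y z => pY (pZ u) x y z * pX (pZ v) x y z
      + pZ u x y z * pY (pX (pZ v)) x y z) = 0 := by
    refine ibpY hL0 (smooth3_pZ hu) (smooth3_pX (smooth3_pZ hv)) (fun x y z => ?_)
    rw [(perXY_pZ hup x y z).2, (perXY_pX (perXY_pZ hvp) x y z).2]
  have hQ6 : JJ L H (fun x y z => pX (pZ u) x y z * pY (pZ v) x y z
      + pZ u x y z * pX (pY (pZ v)) x y z) = 0 := by
    refine ibpX hL0 (smooth3_pZ hu) (smooth3_pY (smooth3_pZ hv)) (fun x y z => ?_)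
    rw [(perXY_pZ hup x y z).1, (perXY_pY (perXY_pZ hvp) x y z).1]
  have hI3 : JJ L H (fP3 u v) = 0 := by
    have e := J_congr (L := L) (H := H) (F := fP3 u v)
      (G := fun x y z => (pY (pZ u) x y z * pX (pZ v) x y z
          + pZ u x y z * pY (pX (pZ v)) x y z)
        - (pX (pZ u) x y z * pY (pZ v) x y z + pZ u x y z * pX (pY (pZ v)) x y z))
      (fun x y z => by simp only [fP3, pYX_comm (smooth3_pZ hv)]; ring)
    rw [e, J_sub (by unfold unc; fun_prop) (by unfold unc; fun_prop), hQ5, hQ6,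
      sub_zero]
  -- the main integral identity
  have key : JJ L H (fFL u v) = JJ L H (fA u v) + (2*δ₀) * JJ L H (fB u v)
      + JJ L H (fC' u v δ₀) + (2-2*δ₀) * JJ L H (fD u v) + δ₀ * JJ L H (fE u v) := by
    have hc1 : Continuous (unc (fA u v)) := by unfold unc fA; fun_prop
    have hc2 : Continuous (unc (fB u v)) := by unfold unc fB; fun_prop
    have hc3 : Continuous (unc (fC' u v δ₀)) := by unfold unc fC'; fun_prop
    have hc4 : Continuous (unc (fD u v)) := by unfold unc fD; fun_prop
    have hc5 : Continuous (unc (fE u v)) := by unfold unc fE; fun_prop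
    have hc6 : Continuous (unc (fP1 u v)) := by unfold unc fP1; fun_prop
    have hc7 : Continuous (unc (fP2 u v)) := by unfold unc fP2; fun_prop
    have hc8 : Continuous (unc (fP3 u v)) := by unfold unc fP3; fun_prop
    have hcombo := J_combo (L := L) (H := H) (F1 := fA u v) (F2 := fB u v)
      (F3 := fC' u v δ₀) (F4 := fD u v) (F5 := fE u v) (F6 := fP1 u v) (F7 := fP2 u v)
      (F8 := fP3 u v) (2*δ₀) (2-2*δ₀) δ₀ (-2) 2 (-(4*δ₀)) hc1 hc2 hc3 hc4 hc5 hc6 hc7 hc8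
    have e1 : JJ L H (fFL u v) = JJ L H (fun x y z =>
        fA u v x y z + ((2*δ₀) * fB u v x y z + (fC' u v δ₀ x y z + ((2-2*δ₀) * fD u v x y z
          + (δ₀ * fE u v x y z + ((-2) * fP1 u v x y z
          + (2 * fP2 u v x y z + (-(4*δ₀)) * fP3 u v x y z))))))) :=
      J_congr (fun x y z => by
        simp only [fFL, fA, fB, fC', fD, fE, fP1, fP2, fP3]; ring)
    rw [e1, hcombo, hI1, hI2, hI3]
    ring
  -- convert goal to JJ form
  have eL : (∫ p in Omega L H,
        (curl1 (fun a b c => -(pZ v a b c)) (pZ u) (om u v) p.1 p.2.1 p.2.2)^2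
        + (curl2 (fun a b c => -(pZ v a b c)) (pZ u) (om u v) p.1 p.2.1 p.2.2)^2
        + (curl3 (fun a b c => -(pZ v a b c)) (pZ u) (om u v) p.1 p.2.1 p.2.2)^2)
      = JJ L H (fFL u v) := by
    refine (J_congr (L := L) (H := H)
      (F := fun x y z => (curl1 (fun a b c => -(pZ v a b c)) (pZ u) (om u v) x y z)^2
        + (curl2 (fun a b c => -(pZ v a b c)) (pZ u) (om u v) x y z)^2
        + (curl3 (fun a b c => -(pZ v a b c)) (pZ u) (om u v) x y z)^2)
      (G := fFL u v) (fun x y z => ?_))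
    simp only [curl1, curl2, curl3, fFL, pZ_neg, pY_neg]
    ring
  have eA : (∫ p in Omega L H, (pX (om u v) p.1 p.2.1 p.2.2)^2
      + (pY (om u v) p.1 p.2.1 p.2.2)^2) = JJ L H (fA u v) := rfl
  have eB : (∫ p in Omega L H, (pY (pZ u) p.1 p.2.1 p.2.2)^2
      + (pX (pZ v) p.1 p.2.1 p.2.2)^2) = JJ L H (fB u v) := rfl
  have eC : (∫ p in Omega L H, (pZ (pZ u) p.1 p.2.1 p.2.2)^2 + (pZ (pZ v) p.1 p.2.1 p.2.2)^2
      + ε^2 * (1 - δ₀) * (pZ (pZ w) p.1 p.2.1 p.2.2)^2) = JJ L H (fC u v w ε δ₀) := rfl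
  rw [eL, eA, eB, eC]
  have eCC : JJ L H (fC u v w ε δ₀) = JJ L H (fC' u v δ₀) := by
    refine J_congr (fun x y z => ?_)
    have h := eW x y z
    have h2 : pX (pZ u) x y z + pY (pZ v) x y z = -(ε * pZ (pZ w) x y z) := by
      rw [h]; ring
    simp only [fC, fC', h2]; ring
  rw [eCC]
  -- final comparison
  have hA0 : 0 ≤ JJ L H (fA u v) := J_nonneg (fun x y z => by simp only [fA]; positivity)
  have hD0 : 0 ≤ JJ L H (fD u v) := J_nonneg (fun x y z => by simp only [fD]; positivity)
  have hE0 : 0 ≤ JJ L H (fE u v) := J_nonneg (fun x y z => by simp only [fE]; positivity)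
  have hm : min 1 (2 * (1 - δ₀)) ≤ 1 := min_le_left _ _
  have h1 : min 1 (2 * (1 - δ₀)) * JJ L H (fA u v) ≤ 1 * JJ L H (fA u v) :=
    mul_le_mul_of_nonneg_right hm hA0
  have h2 : 0 ≤ (2 - 2*δ₀) * JJ L H (fD u v) :=
    mul_nonneg (by linarith) hD0
  have h3 : 0 ≤ δ₀ * JJ L H (fE u v) := mul_nonneg hδ₀.le hE0
  rw [ge_iff_le, key]
  linarith
end
end

section
/- Let u, v be smooth on ℝ² × [0,H], L-periodic in x and y, with u_z = v_z = 0 at z = 0 and z = H, and set ω₃ = v_x − u_y. Then −2 ∫_Ω (ω_{3,y} u_{zz} − ω_{3,x} v_{zz}) dV = 2 ∫_Ω |ω_{3,z}|² dV. -/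
open MeasureTheory Real

noncomputable section

namespace Lempr3Aux

abbrev unc (f : ℝ → ℝ → ℝ → ℝ) : ℝ × ℝ × ℝ → ℝ := fun p => f p.1 p.2.1 p.2.2

abbrev e1 : ℝ × ℝ × ℝ := (1, 0, 0)
abbrev e2 : ℝ × ℝ × ℝ := (0, 1, 0)
abbrev e3 : ℝ × ℝ × ℝ := (0, 0, 1)

variable {f g : ℝ → ℝ → ℝ → ℝ}

lemma hasDerivAt_sliceX (hf : Smooth3 f) (x y z : ℝ) :
    HasDerivAt (fun s => f s y z) (fderiv ℝ (unc f) (x, y, z) e1) x := by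
  have h1 : HasDerivAt (fun s : ℝ => ((s, y, z) : ℝ × ℝ × ℝ)) e1 x :=
    HasDerivAt.prodMk (hasDerivAt_id x) (HasDerivAt.prodMk ((hasDerivAt_const x y)) (hasDerivAt_const x z))
  exact ((hf.differentiable (by simp) (x, y, z)).hasFDerivAt.comp_hasDerivAt x h1 :)

lemma hasDerivAt_sliceY (hf : Smooth3 f) (x y z : ℝ) :
    HasDerivAt (fun s => f x s z) (fderiv ℝ (unc f) (x, y, z) e2) y := by
  have h1 : HasDerivAt (fun s : ℝ => ((x, s, z) : ℝ × ℝ × ℝ)) e2 y :=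
    HasDerivAt.prodMk (hasDerivAt_const y x) (HasDerivAt.prodMk (hasDerivAt_id y) (hasDerivAt_const y z))
  exact ((hf.differentiable (by simp) (x, y, z)).hasFDerivAt.comp_hasDerivAt y h1 :)

lemma hasDerivAt_sliceZ (hf : Smooth3 f) (x y z : ℝ) :
    HasDerivAt (fun s => f x y s) (fderiv ℝ (unc f) (x, y, z) e3) z := by
  have h1 : HasDerivAt (fun s : ℝ => ((x, y, s) : ℝ × ℝ × ℝ)) e3 z :=
    HasDerivAt.prodMk (hasDerivAt_const z x) (HasDerivAt.prodMk (hasDerivAt_const z y) (hasDerivAt_id z))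
  exact ((hf.differentiable (by simp) (x, y, z)).hasFDerivAt.comp_hasDerivAt z h1 :)

lemma pX_eq (hf : Smooth3 f) (x y z : ℝ) :
    pX f x y z = fderiv ℝ (unc f) (x, y, z) e1 := (hasDerivAt_sliceX hf x y z).deriv

lemma pY_eq (hf : Smooth3 f) (x y z : ℝ) :
    pY f x y z = fderiv ℝ (unc f) (x, y, z) e2 := (hasDerivAt_sliceY hf x y z).deriv

lemma pZ_eq (hf : Smooth3 f) (x y z : ℝ) :
    pZ f x y z = fderiv ℝ (unc f) (x, y, z) e3 := (hasDerivAt_sliceZ hf x y z).deriv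

lemma smooth_D (hf : Smooth3 f) (w : ℝ × ℝ × ℝ) :
    ContDiff ℝ (⊤ : ℕ∞) (fun p => fderiv ℝ (unc f) p w) :=
  (hf.fderiv_right (by simp)).clm_apply contDiff_const

lemma smooth_pX (hf : Smooth3 f) : Smooth3 (pX f) := by
  have : unc (pX f) = fun p => fderiv ℝ (unc f) p e1 := by
    funext p; exact pX_eq hf p.1 p.2.1 p.2.2
  unfold Smooth3; rw [show (fun p : ℝ×ℝ×ℝ => pX f p.1 p.2.1 p.2.2) = unc (pX f) from rfl, this]
  exact smooth_D hf e1

lemma smooth_pY (hf : Smooth3 f) : Smooth3 (pY f) := by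
  have : unc (pY f) = fun p => fderiv ℝ (unc f) p e2 := by
    funext p; exact pY_eq hf p.1 p.2.1 p.2.2
  unfold Smooth3; rw [show (fun p : ℝ×ℝ×ℝ => pY f p.1 p.2.1 p.2.2) = unc (pY f) from rfl, this]
  exact smooth_D hf e2

lemma smooth_pZ (hf : Smooth3 f) : Smooth3 (pZ f) := by
  have : unc (pZ f) = fun p => fderiv ℝ (unc f) p e3 := by
    funext p; exact pZ_eq hf p.1 p.2.1 p.2.2
  unfold Smooth3; rw [show (fun p : ℝ×ℝ×ℝ => pZ f p.1 p.2.1 p.2.2) = unc (pZ f) from rfl, this]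
  exact smooth_D hf e3

lemma smooth_mul (hf : Smooth3 f) (hg : Smooth3 g) : Smooth3 (fun x y z => f x y z * g x y z) :=
  hf.mul hg

lemma smooth_sub (hf : Smooth3 f) (hg : Smooth3 g) : Smooth3 (fun x y z => f x y z - g x y z) :=
  hf.sub hg

/-- Clairaut, uncurried. -/
lemma clairaut_unc (F : ℝ × ℝ × ℝ → ℝ) (hF : ContDiff ℝ (⊤ : ℕ∞) F) (a b p) :
    fderiv ℝ (fun q => fderiv ℝ F q b) p a = fderiv ℝ (fun q => fderiv ℝ F q a) p b := by
  have hdF : Differentiable ℝ (fderiv ℝ F) := (hF.fderiv_right (m := (⊤ : ℕ∞)) (by simp)).differentiable (by simp)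
  have key : ∀ v w, fderiv ℝ (fderiv ℝ F) p v w = fderiv ℝ (fderiv ℝ F) p w v := by
    intro v w
    exact second_derivative_symmetric (fun y => (hF.differentiable (by simp) y).hasFDerivAt)
      (hdF p).hasFDerivAt v w
  have h1 : ∀ (c : ℝ × ℝ × ℝ),
      fderiv ℝ (fun q => fderiv ℝ F q c) p = (fderiv ℝ (fderiv ℝ F) p).flip c := by
    intro c
    have := fderiv_clm_apply (hdF p) (differentiableAt_const c)
    simpa using this
  rw [h1 b, h1 a]
  exact key a b

end Lempr3Aux

namespace Lempr3Aux

variable {f g h : ℝ → ℝ → ℝ → ℝ} {L H : ℝ}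

lemma pYpZ_comm (hf : Smooth3 f) : ∀ x y z, pY (pZ f) x y z = pZ (pY f) x y z := by
  intro x y z
  have h1 : unc (pZ f) = fun p => fderiv ℝ (unc f) p e3 := by
    funext p; exact pZ_eq hf p.1 p.2.1 p.2.2
  have h2 : unc (pY f) = fun p => fderiv ℝ (unc f) p e2 := by
    funext p; exact pY_eq hf p.1 p.2.1 p.2.2
  rw [pY_eq (smooth_pZ hf) x y z, pZ_eq (smooth_pY hf) x y z, h1, h2]
  exact clairaut_unc (unc f) hf e2 e3 (x, y, z)

lemma pXpZ_comm (hf : Smooth3 f) : ∀ x y z, pX (pZ f) x y z = pZ (pX f) x y z := by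
  intro x y z
  have h1 : unc (pZ f) = fun p => fderiv ℝ (unc f) p e3 := by
    funext p; exact pZ_eq hf p.1 p.2.1 p.2.2
  have h2 : unc (pX f) = fun p => fderiv ℝ (unc f) p e1 := by
    funext p; exact pX_eq hf p.1 p.2.1 p.2.2
  rw [pX_eq (smooth_pZ hf) x y z, pZ_eq (smooth_pX hf) x y z, h1, h2]
  exact clairaut_unc (unc f) hf e1 e3 (x, y, z)

/-- Slice differentiability -/
lemma diff_sliceX (hf : Smooth3 f) (y z : ℝ) : Differentiable ℝ (fun s => f s y z) :=
  fun x => (hasDerivAt_sliceX hf x y z).differentiableAt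

lemma diff_sliceY (hf : Smooth3 f) (x z : ℝ) : Differentiable ℝ (fun s => f x s z) :=
  fun y => (hasDerivAt_sliceY hf x y z).differentiableAt

lemma diff_sliceZ (hf : Smooth3 f) (x y : ℝ) : Differentiable ℝ (fun s => f x y s) :=
  fun z => (hasDerivAt_sliceZ hf x y z).differentiableAt

lemma cont_sliceX (hf : Smooth3 f) (y z : ℝ) : Continuous (fun s => f s y z) := by
  have : (fun s => f s y z) = (unc f) ∘ (fun s : ℝ => (s, y, z)) := rfl
  rw [this]
  exact hf.continuous.comp (by continuity)

lemma cont_sliceY (hf : Smooth3 f) (x z : ℝ) : Continuous (fun s => f x s z) := by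
  have : (fun s => f x s z) = (unc f) ∘ (fun s : ℝ => (x, s, z)) := rfl
  rw [this]
  exact hf.continuous.comp (by continuity)

lemma cont_sliceZ (hf : Smooth3 f) (x y : ℝ) : Continuous (fun s => f x y s) := by
  have : (fun s => f x y s) = (unc f) ∘ (fun s : ℝ => (x, y, s)) := rfl
  rw [this]
  exact hf.continuous.comp (by continuity)

/-- product rules (curried) -/
lemma pX_mul (hf : Smooth3 f) (hg : Smooth3 g) (x y z : ℝ) :
    pX (fun a b c => f a b c * g a b c) x y z = pX f x y z * g x y z + f x y z * pX g x y z := by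
  simpa [pX] using deriv_fun_mul (diff_sliceX hf y z x) (diff_sliceX hg y z x)

lemma pY_mul (hf : Smooth3 f) (hg : Smooth3 g) (x y z : ℝ) :
    pY (fun a b c => f a b c * g a b c) x y z = pY f x y z * g x y z + f x y z * pY g x y z := by
  simpa [pY] using deriv_fun_mul (diff_sliceY hf x z y) (diff_sliceY hg x z y)

lemma pZ_mul (hf : Smooth3 f) (hg : Smooth3 g) (x y z : ℝ) :
    pZ (fun a b c => f a b c * g a b c) x y z = pZ f x y z * g x y z + f x y z * pZ g x y z := by
  simpa [pZ] using deriv_fun_mul (diff_sliceZ hf x y z) (diff_sliceZ hg x y z)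

lemma pZ_sub (hf : Smooth3 f) (hg : Smooth3 g) (x y z : ℝ) :
    pZ (fun a b c => f a b c - g a b c) x y z = pZ f x y z - pZ g x y z := by
  simpa [pZ] using deriv_fun_sub (diff_sliceZ hf x y z) (diff_sliceZ hg x y z)

end Lempr3Aux

namespace Lempr3Aux

variable {f g h : ℝ → ℝ → ℝ → ℝ} {L H : ℝ}

lemma oneD_ftc {a b : ℝ} (hab : a ≤ b) {g : ℝ → ℝ} (hg : Differentiable ℝ g)
    (hc : Continuous (deriv g)) : ∫ x in Set.Icc a b, deriv g x = g b - g a := by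
  rw [integral_Icc_eq_integral_Ioc, ← intervalIntegral.integral_of_le hab]
  exact intervalIntegral.integral_deriv_eq_sub (fun x _ => hg x) (hc.intervalIntegrable a b)

lemma ftcX (hh : Smooth3 h) {a b : ℝ} (hab : a ≤ b) (y z : ℝ) :
    ∫ x in Set.Icc a b, pX h x y z = h b y z - h a y z := by
  have : (fun x => pX h x y z) = deriv (fun s => h s y z) := rfl
  rw [show (∫ x in Set.Icc a b, pX h x y z) = ∫ x in Set.Icc a b, deriv (fun s => h s y z) x from rfl]
  exact oneD_ftc hab (diff_sliceX hh y z) (cont_sliceX (smooth_pX hh) y z)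

lemma ftcY (hh : Smooth3 h) {a b : ℝ} (hab : a ≤ b) (x z : ℝ) :
    ∫ y in Set.Icc a b, pY h x y z = h x b z - h x a z := by
  rw [show (∫ y in Set.Icc a b, pY h x y z) = ∫ y in Set.Icc a b, deriv (fun s => h x s z) y from rfl]
  exact oneD_ftc hab (diff_sliceY hh x z) (cont_sliceY (smooth_pY hh) x z)

lemma ftcZ (hh : Smooth3 h) {a b : ℝ} (hab : a ≤ b) (x y : ℝ) :
    ∫ z in Set.Icc a b, pZ h x y z = h x y b - h x y a := by
  rw [show (∫ z in Set.Icc a b, pZ h x y z) = ∫ z in Set.Icc a b, deriv (fun s => h x y s) z from rfl]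
  exact oneD_ftc hab (diff_sliceZ hh x y) (cont_sliceZ (smooth_pZ hh) x y)

lemma isCompact_box (L H : ℝ) : IsCompact (Omega L H) :=
  isCompact_Icc.prod (isCompact_Icc.prod isCompact_Icc)

lemma integrableOn_box (hh : Smooth3 h) :
    IntegrableOn (unc h) (Omega L H) volume :=
  hh.continuous.continuousOn.integrableOn_compact (isCompact_box L H)

lemma hvol3 : (volume : Measure (ℝ × ℝ × ℝ)) = (volume : Measure ℝ).prod (volume : Measure (ℝ × ℝ)) := rfl
lemma hvol2 : (volume : Measure (ℝ × ℝ)) = (volume : Measure ℝ).prod (volume : Measure ℝ) := rfl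

/-- First Fubini step over the box. -/
lemma box_iterate (hh : Smooth3 h) :
    ∫ p in Omega L H, unc h p
      = ∫ x in Set.Icc (0:ℝ) L, ∫ q in (Set.Icc (0:ℝ) L) ×ˢ (Set.Icc (0:ℝ) H), h x q.1 q.2 := by
  have hint := integrableOn_box (L := L) (H := H) hh
  rw [show (∫ p in Omega L H, unc h p) = ∫ p in (Set.Icc (0:ℝ) L) ×ˢ ((Set.Icc (0:ℝ) L) ×ˢ (Set.Icc (0:ℝ) H)), unc h p ∂((volume : Measure ℝ).prod (volume : Measure (ℝ × ℝ))) from by rw [← hvol3]; rfl]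
  exact setIntegral_prod _ (hvol3 ▸ hint)

/-- Second Fubini step over the square. -/
lemma square_iterate {G : ℝ × ℝ → ℝ} (hG : Continuous G) {a b c d : ℝ} :
    ∫ q in (Set.Icc a b) ×ˢ (Set.Icc c d), G q
      = ∫ y in Set.Icc a b, ∫ z in Set.Icc c d, G (y, z) := by
  have hint : IntegrableOn G ((Set.Icc a b) ×ˢ (Set.Icc c d)) volume :=
    hG.continuousOn.integrableOn_compact (isCompact_Icc.prod isCompact_Icc)
  rw [show (∫ q in (Set.Icc a b) ×ˢ (Set.Icc c d), G q) = ∫ q in (Set.Icc a b) ×ˢ (Set.Icc c d), G q ∂((volume : Measure ℝ).prod (volume : Measure ℝ)) from by rw [← hvol2]]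
  exact setIntegral_prod _ (hvol2 ▸ hint)

/-- Swap of a double integral of a continuous function over Icc's. -/
lemma swap_icc {G : ℝ × ℝ → ℝ} (hG : Continuous G) {a b c d : ℝ} :
    ∫ y in Set.Icc a b, ∫ z in Set.Icc c d, G (y, z)
      = ∫ z in Set.Icc c d, ∫ y in Set.Icc a b, G (y, z) := by
  have hint : Integrable (Function.uncurry fun y z => G (y, z))
      ((volume.restrict (Set.Icc a b)).prod (volume.restrict (Set.Icc c d))) := by
    rw [Measure.prod_restrict]
    have : IntegrableOn G ((Set.Icc a b) ×ˢ (Set.Icc c d)) volume :=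
      hG.continuousOn.integrableOn_compact (isCompact_Icc.prod isCompact_Icc)
    exact hvol2 ▸ this
  exact integral_integral_swap hint

end Lempr3Aux

namespace Lempr3Aux

variable {f g h : ℝ → ℝ → ℝ → ℝ} {L H : ℝ}

lemma swap_box {G : ℝ × (ℝ × ℝ) → ℝ} (hG : Continuous G) {a b : ℝ} {t : Set (ℝ × ℝ)}
    (ht : IsCompact t) :
    ∫ x in Set.Icc a b, ∫ q in t, G (x, q)
      = ∫ q in t, ∫ x in Set.Icc a b, G (x, q) := by
  have hint : Integrable (Function.uncurry fun x q => G (x, q))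
      ((volume.restrict (Set.Icc a b)).prod (volume.restrict t)) := by
    rw [Measure.prod_restrict]
    have : IntegrableOn G ((Set.Icc a b) ×ˢ t) volume :=
      hG.continuousOn.integrableOn_compact (isCompact_Icc.prod ht)
    exact hvol3 ▸ this
  exact integral_integral_swap hint

lemma integral_pX_zero (hL : 0 ≤ L) (hh : Smooth3 h) (hper : ∀ y z, h L y z = h 0 y z) :
    ∫ p in Omega L H, unc (pX h) p = 0 := by
  rw [box_iterate (smooth_pX hh)]
  rw [swap_box (G := unc (pX h)) (smooth_pX hh).continuous (isCompact_Icc.prod isCompact_Icc)]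
  have inner : ∀ q : ℝ × ℝ, (∫ x in Set.Icc (0:ℝ) L, pX h x q.1 q.2) = 0 := by
    intro q; rw [ftcX hh hL, hper]; ring
  simp only [inner, integral_zero]

lemma integral_pY_zero (hL : 0 ≤ L) (hh : Smooth3 h) (hper : ∀ x z, h x L z = h x 0 z) :
    ∫ p in Omega L H, unc (pY h) p = 0 := by
  rw [box_iterate (smooth_pY hh)]
  have inner : ∀ x : ℝ,
      (∫ q in (Set.Icc (0:ℝ) L) ×ˢ (Set.Icc (0:ℝ) H), pY h x q.1 q.2) = 0 := by
    intro x
    have hGc : Continuous (fun q : ℝ × ℝ => pY h x q.1 q.2) := by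
      have : (fun q : ℝ × ℝ => pY h x q.1 q.2) = (unc (pY h)) ∘ (fun q : ℝ × ℝ => (x, q)) := rfl
      rw [this]; exact (smooth_pY hh).continuous.comp (by continuity)
    rw [square_iterate (G := fun q : ℝ × ℝ => pY h x q.1 q.2) hGc]
    rw [swap_icc (G := fun q : ℝ × ℝ => pY h x q.1 q.2) hGc]
    have inner2 : ∀ z : ℝ, (∫ y in Set.Icc (0:ℝ) L, pY h x y z) = 0 := by
      intro z; rw [ftcY hh hL, hper]; ring
    simp only [inner2, integral_zero]
  simp only [inner, integral_zero]

lemma integral_pZ_zero (hH : 0 ≤ H) (hh : Smooth3 h) (hbd : ∀ x y, h x y H = h x y 0) :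
    ∫ p in Omega L H, unc (pZ h) p = 0 := by
  rw [box_iterate (smooth_pZ hh)]
  have inner : ∀ x : ℝ,
      (∫ q in (Set.Icc (0:ℝ) L) ×ˢ (Set.Icc (0:ℝ) H), pZ h x q.1 q.2) = 0 := by
    intro x
    have hGc : Continuous (fun q : ℝ × ℝ => pZ h x q.1 q.2) := by
      have : (fun q : ℝ × ℝ => pZ h x q.1 q.2) = (unc (pZ h)) ∘ (fun q : ℝ × ℝ => (x, q)) := rfl
      rw [this]; exact (smooth_pZ hh).continuous.comp (by continuity)
    rw [square_iterate (G := fun q : ℝ × ℝ => pZ h x q.1 q.2) hGc]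
    have inner2 : ∀ y : ℝ, (∫ z in Set.Icc (0:ℝ) H, pZ h x y z) = 0 := by
      intro y; rw [ftcZ hh hH, hbd]; ring
    simp only [inner2, integral_zero]
  simp only [inner, integral_zero]

/-- Periodicity transfers. -/
lemma perXY_pX (hfp : PerXY L f) : PerXY L (pX f) := by
  intro x y z
  constructor
  · have hg : (fun s => f (s + L) y z) = (fun s => f s y z) := funext fun s => (hfp s y z).1
    have := deriv_comp_add_const (fun s => f s y z) L x
    rw [hg] at this
    exact (this).symm
  · have hg : (fun s => f s (y + L) z) = (fun s => f s y z) := funext fun s => (hfp s y z).2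
    simp only [pX, hg]

lemma perXY_pY (hfp : PerXY L f) : PerXY L (pY f) := by
  intro x y z
  constructor
  · have hg : (fun s => f (x + L) s z) = (fun s => f x s z) := funext fun s => (hfp x s z).1
    simp only [pY, hg]
  · have hg : (fun s => f x (s + L) z) = (fun s => f x s z) := funext fun s => (hfp x s z).2
    have := deriv_comp_add_const (fun s => f x s z) L y
    rw [hg] at this
    exact (this).symm

lemma perXY_pZ (hfp : PerXY L f) : PerXY L (pZ f) := by
  intro x y z
  refine ⟨?_, ?_⟩
  · have hg : (fun s => f (x + L) y s) = (fun s => f x y s) := funext fun s => (hfp x y s).1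
    simp only [pZ, hg]
  · have hg : (fun s => f x (y + L) s) = (fun s => f x y s) := funext fun s => (hfp x y s).2
    simp only [pZ, hg]

lemma perXY_mul (hfp : PerXY L f) (hgp : PerXY L g) :
    PerXY L (fun a b c => f a b c * g a b c) := by
  intro x y z
  exact ⟨by simp only [(hfp x y z).1, (hgp x y z).1], by simp only [(hfp x y z).2, (hgp x y z).2]⟩

lemma perXY_sub (hfp : PerXY L f) (hgp : PerXY L g) :
    PerXY L (fun a b c => f a b c - g a b c) := by
  intro x y z
  exact ⟨by simp only [(hfp x y z).1, (hgp x y z).1], by simp only [(hfp x y z).2, (hgp x y z).2]⟩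

end Lempr3Aux

open Lempr3Aux

/-- Identity (lempr3): −2∫(ω₃,y u_zz − ω₃,x v_zz) dV = 2∫|ω₃,z|² dV. -/
theorem lempr3 (L H : ℝ) (hL : 0 < L) (hH : 0 < H)
    (u v : ℝ → ℝ → ℝ → ℝ) (hu : Smooth3 u) (hv : Smooth3 v)
    (hup : PerXY L u) (hvp : PerXY L v)
    (hbc : ∀ x y : ℝ, pZ u x y 0 = 0 ∧ pZ u x y H = 0 ∧ pZ v x y 0 = 0 ∧ pZ v x y H = 0) :
    -2 * (∫ p in Omega L H,
        pY (om u v) p.1 p.2.1 p.2.2 * pZ (pZ u) p.1 p.2.1 p.2.2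
        - pX (om u v) p.1 p.2.1 p.2.2 * pZ (pZ v) p.1 p.2.1 p.2.2)
      = 2 * ∫ p in Omega L H, (pZ (om u v) p.1 p.2.1 p.2.2)^2 := by
  set W : ℝ → ℝ → ℝ → ℝ := om u v with hW
  have sW : Smooth3 W := smooth_sub (smooth_pX hv) (smooth_pY hu)
  have pW : PerXY L W := perXY_sub (perXY_pX hvp) (perXY_pY hup)
  -- abbreviations
  set A : ℝ → ℝ → ℝ → ℝ :=
    fun x y z => pY W x y z * pZ (pZ u) x y z - pX W x y z * pZ (pZ v) x y z with hA
  set B : ℝ → ℝ → ℝ → ℝ := fun x y z => (pZ W x y z) ^ 2 with hB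
  have sA : Smooth3 A :=
    smooth_sub (smooth_mul (smooth_pY sW) (smooth_pZ (smooth_pZ hu)))
      (smooth_mul (smooth_pX sW) (smooth_pZ (smooth_pZ hv)))
  have sB : Smooth3 B := by
    have := smooth_mul (smooth_pZ sW) (smooth_pZ sW)
    unfold Smooth3 at this ⊢
    simp only [hB]
    simpa [pow_two] using this
  -- the divergence fields
  set h1 : ℝ → ℝ → ℝ → ℝ := fun a b c => W a b c * pZ (pZ v) a b c with hh1
  set h2 : ℝ → ℝ → ℝ → ℝ := fun a b c => W a b c * pZ (pZ u) a b c with hh2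
  set h3 : ℝ → ℝ → ℝ → ℝ := fun a b c => W a b c * pZ W a b c with hh3
  have sh1 : Smooth3 h1 := smooth_mul sW (smooth_pZ (smooth_pZ hv))
  have sh2 : Smooth3 h2 := smooth_mul sW (smooth_pZ (smooth_pZ hu))
  have sh3 : Smooth3 h3 := smooth_mul sW (smooth_pZ sW)
  -- pZ W as a function
  have pZW_eq : pZ W = fun x y z => pZ (pX v) x y z - pZ (pY u) x y z := by
    funext x y z
    exact pZ_sub (smooth_pX hv) (smooth_pY hu) x y z
  have pZpZW_eq : ∀ x y z, pZ (pZ W) x y z = pZ (pZ (pX v)) x y z - pZ (pZ (pY u)) x y z := by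
    intro x y z
    rw [pZW_eq]
    exact pZ_sub (smooth_pZ (smooth_pX hv)) (smooth_pZ (smooth_pY hu)) x y z
  -- Clairaut rearrangements
  have comm_u : ∀ x y z, pY (pZ (pZ u)) x y z = pZ (pZ (pY u)) x y z := by
    intro x y z
    rw [pYpZ_comm (smooth_pZ hu) x y z]
    have hfun : pY (pZ u) = pZ (pY u) := funext fun a => funext fun b => funext fun c =>
      pYpZ_comm hu a b c
    rw [hfun]
  have comm_v : ∀ x y z, pX (pZ (pZ v)) x y z = pZ (pZ (pX v)) x y z := by
    intro x y z
    rw [pXpZ_comm (smooth_pZ hv) x y z]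
    have hfun : pX (pZ v) = pZ (pX v) := funext fun a => funext fun b => funext fun c =>
      pXpZ_comm hv a b c
    rw [hfun]
  -- pointwise divergence identity
  have hpt : ∀ x y z, A x y z + B x y z = pY h2 x y z - pX h1 x y z + pZ h3 x y z := by
    intro x y z
    rw [hh2, hh1, hh3]
    rw [pY_mul sW (smooth_pZ (smooth_pZ hu)) x y z,
        pX_mul sW (smooth_pZ (smooth_pZ hv)) x y z,
        pZ_mul sW (smooth_pZ sW) x y z]
    rw [hA, hB]
    beta_reduce
    rw [comm_u x y z, comm_v x y z, pZpZW_eq x y z]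
    ring
  -- boundary values of pZ W
  have bdW : ∀ x y z, (z = 0 ∨ z = H) → pZ W x y z = 0 := by
    intro x y z hz
    rw [pZW_eq]
    have h1v : pZ (pX v) x y z = pX (pZ v) x y z := (pXpZ_comm hv x y z).symm
    have h1u : pZ (pY u) x y z = pY (pZ u) x y z := (pYpZ_comm hu x y z).symm
    have hv0 : pX (pZ v) x y z = 0 := by
      have : (fun s => pZ v s y z) = fun _ => (0:ℝ) := by
        funext s
        rcases hz with rfl | rfl
        · exact (hbc s y).2.2.1
        · exact (hbc s y).2.2.2
      simp only [pX, this, deriv_const]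
    have hu0 : pY (pZ u) x y z = 0 := by
      have : (fun s => pZ u x s z) = fun _ => (0:ℝ) := by
        funext s
        rcases hz with rfl | rfl
        · exact (hbc x s).1
        · exact (hbc x s).2.1
      simp only [pY, this, deriv_const]
    simp [h1v, h1u, hv0, hu0]
  -- the three divergence integrals vanish
  have i1 : ∫ p in Omega L H, unc (pX h1) p = 0 := by
    apply integral_pX_zero hL.le sh1
    intro y z
    have := ((perXY_mul pW (perXY_pZ (perXY_pZ hvp))) 0 y z).1
    simpa using this
  have i2 : ∫ p in Omega L H, unc (pY h2) p = 0 := by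
    apply integral_pY_zero hL.le sh2
    intro x z
    have := ((perXY_mul pW (perXY_pZ (perXY_pZ hup))) x 0 z).2
    simpa using this
  have i3 : ∫ p in Omega L H, unc (pZ h3) p = 0 := by
    apply integral_pZ_zero hH.le sh3
    intro x y
    have e0 : h3 x y 0 = 0 := by
      rw [hh3]; simp [bdW x y 0 (Or.inl rfl)]
    have eH : h3 x y H = 0 := by
      rw [hh3]; simp [bdW x y H (Or.inr rfl)]
    rw [e0, eH]
  -- integral of A + B is zero
  have intA : IntegrableOn (unc A) (Omega L H) volume := integrableOn_box sA
  have intB : IntegrableOn (unc B) (Omega L H) volume := integrableOn_box sB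
  have key : (∫ p in Omega L H, unc A p) + (∫ p in Omega L H, unc B p) = 0 := by
    rw [← integral_add intA intB]
    have hfe : (fun p : ℝ × ℝ × ℝ => unc A p + unc B p)
        = fun p => unc (pY h2) p - unc (pX h1) p + unc (pZ h3) p := by
      funext p
      exact hpt p.1 p.2.1 p.2.2
    rw [hfe]
    have hsub : Integrable (fun p => unc (pY h2) p - unc (pX h1) p)
        (volume.restrict (Omega L H)) :=
      (integrableOn_box (smooth_pY sh2)).sub (integrableOn_box (smooth_pX sh1))
    have hD3 : Integrable (fun p => unc (pZ h3) p) (volume.restrict (Omega L H)) :=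
      integrableOn_box (smooth_pZ sh3)
    rw [integral_add hsub hD3,
      integral_sub (integrableOn_box (smooth_pY sh2)) (integrableOn_box (smooth_pX sh1)),
      i1, i2, i3]
    ring
  have hgoal1 : (∫ p in Omega L H,
      pY (om u v) p.1 p.2.1 p.2.2 * pZ (pZ u) p.1 p.2.1 p.2.2
        - pX (om u v) p.1 p.2.1 p.2.2 * pZ (pZ v) p.1 p.2.1 p.2.2)
      = ∫ p in Omega L H, unc A p := rfl
  have hgoal2 : (∫ p in Omega L H, (pZ (om u v) p.1 p.2.1 p.2.2)^2)
      = ∫ p in Omega L H, unc B p := rfl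
  rw [hgoal1, hgoal2]
  linarith [key]
end
end

section
/- Let u, v, w be smooth on ℝ² × [0,H], L-periodic in x and y, and let ε > 0 satisfy ε w_z = −(u_x + v_y) everywhere. Set ω₃ = v_x − u_y. Then ∫_Ω (ε²|w_{zz}|² + 2|ω_{3,z}|²) dV = ∫_Ω ((u_{xz} − v_{yz})² + 2(u_{yz}² + v_{xz}²)) dV; in particular ∫_Ω (ε²|w_{zz}|² + 2|ω_{3,z}|²) dV ≥ 2 ∫_Ω (u_{yz}² + v_{xz}²) dV. -/
open MeasureTheory Real

noncomputable section

/-! ### Auxiliary development -/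

/-- The uncurried version of a scalar field. -/
def P3 (f : ℝ → ℝ → ℝ → ℝ) : ℝ × ℝ × ℝ → ℝ := fun p => f p.1 p.2.1 p.2.2

lemma hasDerivAt_sliceX (f : ℝ → ℝ → ℝ → ℝ) (hf : Smooth3 f) (x y z : ℝ) :
    HasDerivAt (fun s => f s y z) (fderiv ℝ (P3 f) (x, y, z) (1, 0, 0)) x := by
  have hc : HasDerivAt (fun s : ℝ => (s, y, z)) ((1 : ℝ), (0 : ℝ), (0 : ℝ)) x :=
    (hasDerivAt_id x).prodMk (hasDerivAt_const x (y, z))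
  exact (hf.differentiable (by simp) (x, y, z)).hasFDerivAt.comp_hasDerivAt x hc

lemma hasDerivAt_sliceY (f : ℝ → ℝ → ℝ → ℝ) (hf : Smooth3 f) (x y z : ℝ) :
    HasDerivAt (fun s => f x s z) (fderiv ℝ (P3 f) (x, y, z) (0, 1, 0)) y := by
  have hc : HasDerivAt (fun s : ℝ => (x, s, z)) ((0 : ℝ), (1 : ℝ), (0 : ℝ)) y :=
    (hasDerivAt_const y x).prodMk ((hasDerivAt_id y).prodMk (hasDerivAt_const y z))
  exact (hf.differentiable (by simp) (x, y, z)).hasFDerivAt.comp_hasDerivAt y hc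

lemma hasDerivAt_sliceZ (f : ℝ → ℝ → ℝ → ℝ) (hf : Smooth3 f) (x y z : ℝ) :
    HasDerivAt (fun s => f x y s) (fderiv ℝ (P3 f) (x, y, z) (0, 0, 1)) z := by
  have hc : HasDerivAt (fun s : ℝ => (x, y, s)) ((0 : ℝ), (0 : ℝ), (1 : ℝ)) z :=
    (hasDerivAt_const z x).prodMk ((hasDerivAt_const z y).prodMk (hasDerivAt_id z))
  exact (hf.differentiable (by simp) (x, y, z)).hasFDerivAt.comp_hasDerivAt z hc

lemma pX_eq (f : ℝ → ℝ → ℝ → ℝ) (hf : Smooth3 f) (x y z : ℝ) :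
    pX f x y z = fderiv ℝ (P3 f) (x, y, z) (1, 0, 0) := (hasDerivAt_sliceX f hf x y z).deriv

lemma pY_eq (f : ℝ → ℝ → ℝ → ℝ) (hf : Smooth3 f) (x y z : ℝ) :
    pY f x y z = fderiv ℝ (P3 f) (x, y, z) (0, 1, 0) := (hasDerivAt_sliceY f hf x y z).deriv

lemma pZ_eq (f : ℝ → ℝ → ℝ → ℝ) (hf : Smooth3 f) (x y z : ℝ) :
    pZ f x y z = fderiv ℝ (P3 f) (x, y, z) (0, 0, 1) := (hasDerivAt_sliceZ f hf x y z).deriv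

lemma P3_pX (f : ℝ → ℝ → ℝ → ℝ) (hf : Smooth3 f) :
    P3 (pX f) = fun p => fderiv ℝ (P3 f) p (1, 0, 0) := by
  funext p; exact pX_eq f hf p.1 p.2.1 p.2.2

lemma P3_pY (f : ℝ → ℝ → ℝ → ℝ) (hf : Smooth3 f) :
    P3 (pY f) = fun p => fderiv ℝ (P3 f) p (0, 1, 0) := by
  funext p; exact pY_eq f hf p.1 p.2.1 p.2.2

lemma P3_pZ (f : ℝ → ℝ → ℝ → ℝ) (hf : Smooth3 f) :
    P3 (pZ f) = fun p => fderiv ℝ (P3 f) p (0, 0, 1) := by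
  funext p; exact pZ_eq f hf p.1 p.2.1 p.2.2

lemma smooth_fderiv_apply (f : ℝ × ℝ × ℝ → ℝ) (hf : ContDiff ℝ (⊤ : ℕ∞) f) (v : ℝ × ℝ × ℝ) :
    ContDiff ℝ (⊤ : ℕ∞) (fun p => fderiv ℝ f p v) :=
  (hf.fderiv_right (by simp)).clm_apply contDiff_const

lemma smooth_pX (f : ℝ → ℝ → ℝ → ℝ) (hf : Smooth3 f) : Smooth3 (pX f) := by
  show ContDiff ℝ (⊤ : ℕ∞) (P3 (pX f))
  rw [P3_pX f hf]; exact smooth_fderiv_apply _ hf _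

lemma smooth_pY (f : ℝ → ℝ → ℝ → ℝ) (hf : Smooth3 f) : Smooth3 (pY f) := by
  show ContDiff ℝ (⊤ : ℕ∞) (P3 (pY f))
  rw [P3_pY f hf]; exact smooth_fderiv_apply _ hf _

lemma smooth_pZ (f : ℝ → ℝ → ℝ → ℝ) (hf : Smooth3 f) : Smooth3 (pZ f) := by
  show ContDiff ℝ (⊤ : ℕ∞) (P3 (pZ f))
  rw [P3_pZ f hf]; exact smooth_fderiv_apply _ hf _

lemma deriv_periodic (g : ℝ → ℝ) (L x : ℝ) (hg : ∀ s, g (s + L) = g s) :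
    deriv g (x + L) = deriv g x := by
  have h1 : deriv g (x + L) = deriv (fun s => g (s + L)) x := (deriv_comp_add_const g L x).symm
  rw [h1, funext hg]

lemma perXY_pX {L : ℝ} {f : ℝ → ℝ → ℝ → ℝ} (hf : PerXY L f) : PerXY L (pX f) := by
  intro x y z
  constructor
  · exact deriv_periodic (fun s => f s y z) L x (fun s => (hf s y z).1)
  · show deriv (fun s => f s (y + L) z) x = _
    have : (fun s => f s (y + L) z) = fun s => f s y z := funext fun s => (hf s y z).2
    rw [this]; rfl

lemma perXY_pY {L : ℝ} {f : ℝ → ℝ → ℝ → ℝ} (hf : PerXY L f) : PerXY L (pY f) := by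
  intro x y z
  constructor
  · show deriv (fun s => f (x + L) s z) y = _
    have : (fun s => f (x + L) s z) = fun s => f x s z := funext fun s => (hf x s z).1
    rw [this]; rfl
  · exact deriv_periodic (fun s => f x s z) L y (fun s => (hf x s z).2)

lemma perXY_pZ {L : ℝ} {f : ℝ → ℝ → ℝ → ℝ} (hf : PerXY L f) : PerXY L (pZ f) := by
  intro x y z
  constructor
  · show deriv (fun s => f (x + L) y s) z = _
    have : (fun s => f (x + L) y s) = fun s => f x y s := funext fun s => (hf x y s).1
    rw [this]; rfl
  · show deriv (fun s => f x (y + L) s) z = _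
    have : (fun s => f x (y + L) s) = fun s => f x y s := funext fun s => (hf x y s).2
    rw [this]; rfl

lemma fderiv_apply_fixed (g : ℝ × ℝ × ℝ → ℝ) (hg : ContDiff ℝ (⊤ : ℕ∞) g) (q v w : ℝ × ℝ × ℝ) :
    fderiv ℝ (fun p => fderiv ℝ g p w) q v = fderiv ℝ (fderiv ℝ g) q v w := by
  have hc : DifferentiableAt ℝ (fderiv ℝ g) q :=
    ((hg.fderiv_right (m := (⊤ : ℕ∞)) (by simp)).differentiable (by simp)) q
  rw [fderiv_clm_apply hc (differentiableAt_const w)]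
  simp

lemma symm2 (g : ℝ × ℝ × ℝ → ℝ) (hg : ContDiff ℝ (⊤ : ℕ∞) g) (q v w : ℝ × ℝ × ℝ) :
    fderiv ℝ (fderiv ℝ g) q v w = fderiv ℝ (fderiv ℝ g) q w v :=
  (hg.contDiffAt.isSymmSndFDerivAt (n := (⊤ : ℕ∞))
    (by rw [minSmoothness_of_isRCLikeNormedField]; exact WithTop.coe_le_coe.mpr (le_top : (2:ℕ∞) ≤ ⊤))) v w

lemma mixed (f : ℝ → ℝ → ℝ → ℝ) (hf : Smooth3 f) (x y z : ℝ) (v w : ℝ × ℝ × ℝ) :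
    fderiv ℝ (fun p => fderiv ℝ (P3 f) p w) (x, y, z) v
      = fderiv ℝ (fun p => fderiv ℝ (P3 f) p v) (x, y, z) w := by
  rw [fderiv_apply_fixed (P3 f) hf _ v w, fderiv_apply_fixed (P3 f) hf _ w v,
    symm2 (P3 f) hf _ v w]

lemma pXpY_comm (f : ℝ → ℝ → ℝ → ℝ) (hf : Smooth3 f) (x y z : ℝ) :
    pX (pY f) x y z = pY (pX f) x y z := by
  rw [pX_eq (pY f) (smooth_pY f hf) x y z, pY_eq (pX f) (smooth_pX f hf) x y z,
    P3_pY f hf, P3_pX f hf]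
  exact mixed f hf x y z _ _

lemma pXpZ_comm (f : ℝ → ℝ → ℝ → ℝ) (hf : Smooth3 f) (x y z : ℝ) :
    pX (pZ f) x y z = pZ (pX f) x y z := by
  rw [pX_eq (pZ f) (smooth_pZ f hf) x y z, pZ_eq (pX f) (smooth_pX f hf) x y z,
    P3_pZ f hf, P3_pX f hf]
  exact mixed f hf x y z _ _

lemma pYpZ_comm (f : ℝ → ℝ → ℝ → ℝ) (hf : Smooth3 f) (x y z : ℝ) :
    pY (pZ f) x y z = pZ (pY f) x y z := by
  rw [pY_eq (pZ f) (smooth_pZ f hf) x y z, pZ_eq (pY f) (smooth_pY f hf) x y z,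
    P3_pZ f hf, P3_pY f hf]
  exact mixed f hf x y z _ _

/-! ### Integration infrastructure -/

lemma splitIcc (a b c : ℝ) (g : ℝ × ℝ × ℝ → ℝ) (hg : Continuous g) :
    ∫ p in (Set.Icc (0:ℝ) a ×ˢ Set.Icc (0:ℝ) b ×ˢ Set.Icc (0:ℝ) c), g p
      = ∫ x in Set.Icc (0:ℝ) a, ∫ y in Set.Icc (0:ℝ) b, ∫ z in Set.Icc (0:ℝ) c, g (x, y, z) := by
  have hcomp : IsCompact (Set.Icc (0:ℝ) a ×ˢ Set.Icc (0:ℝ) b ×ˢ Set.Icc (0:ℝ) c) :=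
    isCompact_Icc.prod (isCompact_Icc.prod isCompact_Icc)
  have hint : IntegrableOn g (Set.Icc (0:ℝ) a ×ˢ Set.Icc (0:ℝ) b ×ˢ Set.Icc (0:ℝ) c) volume :=
    hg.continuousOn.integrableOn_compact hcomp
  rw [Measure.volume_eq_prod] at hint ⊢
  rw [setIntegral_prod _ hint]
  congr 1
  funext x
  have hint2 : IntegrableOn (fun q : ℝ × ℝ => g (x, q))
      (Set.Icc (0:ℝ) b ×ˢ Set.Icc (0:ℝ) c) volume :=
    (hg.comp (continuous_const.prodMk continuous_id)).continuousOn.integrableOn_compact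
      (isCompact_Icc.prod isCompact_Icc)
  rw [Measure.volume_eq_prod] at hint2
  exact setIntegral_prod _ hint2

/-- The measurable equivalence (z, x, y) ↦ (x, y, z). -/
def E3 : (ℝ × ℝ × ℝ) ≃ᵐ (ℝ × ℝ × ℝ) :=
  (MeasurableEquiv.prodComm : ℝ × (ℝ × ℝ) ≃ᵐ (ℝ × ℝ) × ℝ).trans MeasurableEquiv.prodAssoc

lemma E3_apply (q : ℝ × ℝ × ℝ) : E3 q = (q.2.1, q.2.2, q.1) := by
  simp [E3, MeasurableEquiv.trans, MeasurableEquiv.prodComm, MeasurableEquiv.prodAssoc,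
    Equiv.prodComm, Equiv.prodAssoc]

lemma E3_mp : MeasurePreserving E3 (volume : Measure (ℝ×ℝ×ℝ)) volume := by
  have h1 : MeasurePreserving Prod.swap
      ((volume : Measure ℝ).prod ((volume : Measure ℝ).prod volume))
      (((volume : Measure ℝ).prod volume).prod volume) :=
    MeasureTheory.Measure.measurePreserving_swap (μ := (volume : Measure ℝ))
      (ν := (volume : Measure ℝ).prod (volume : Measure ℝ))
  have h2 := measurePreserving_prodAssoc (volume : Measure ℝ) (volume : Measure ℝ)
    (volume : Measure ℝ)
  have he : ⇑E3 = ⇑(MeasurableEquiv.prodAssoc : (ℝ×ℝ)×ℝ ≃ᵐ ℝ×ℝ×ℝ) ∘ Prod.swap := by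
    funext q; rw [E3_apply]; rfl
  rw [he]
  simp only [Measure.volume_eq_prod]
  exact h2.comp h1

lemma tripleZXY (L H : ℝ) (h : ℝ × ℝ × ℝ → ℝ) (hc : Continuous h) :
    ∫ p in (Set.Icc (0:ℝ) L ×ˢ Set.Icc (0:ℝ) L ×ˢ Set.Icc (0:ℝ) H), h p
      = ∫ z in Set.Icc (0:ℝ) H, ∫ x in Set.Icc (0:ℝ) L, ∫ y in Set.Icc (0:ℝ) L, h (x, y, z) := by
  have hpre : E3 ⁻¹' (Set.Icc (0:ℝ) L ×ˢ Set.Icc (0:ℝ) L ×ˢ Set.Icc (0:ℝ) H)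
      = Set.Icc (0:ℝ) H ×ˢ Set.Icc (0:ℝ) L ×ˢ Set.Icc (0:ℝ) L := by
    ext ⟨z, x, y⟩
    simp only [Set.mem_preimage, E3_apply, Set.mem_prod, Set.mem_Icc]
    tauto
  have h0 := E3_mp.setIntegral_preimage_emb E3.measurableEmbedding h
    (Set.Icc (0:ℝ) L ×ˢ Set.Icc (0:ℝ) L ×ˢ Set.Icc (0:ℝ) H)
  rw [hpre] at h0
  rw [← h0]
  have h1 : ∀ q : ℝ×ℝ×ℝ, h (E3 q) = h (q.2.1, q.2.2, q.1) := fun q => by rw [E3_apply]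
  calc ∫ q in Set.Icc (0:ℝ) H ×ˢ Set.Icc (0:ℝ) L ×ˢ Set.Icc (0:ℝ) L, h (E3 q)
      = ∫ q in Set.Icc (0:ℝ) H ×ˢ Set.Icc (0:ℝ) L ×ˢ Set.Icc (0:ℝ) L,
          (fun q : ℝ×ℝ×ℝ => h (q.2.1, q.2.2, q.1)) q :=
        setIntegral_congr_fun (by measurability) (fun q _ => h1 q)
    _ = ∫ z in Set.Icc (0:ℝ) H, ∫ x in Set.Icc (0:ℝ) L, ∫ y in Set.Icc (0:ℝ) L, h (x, y, z) :=
        splitIcc H L L _ (hc.comp (by fun_prop))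

lemma swap2D (a b : ℝ) (g : ℝ → ℝ → ℝ) (hg : Continuous (Function.uncurry g)) :
    ∫ x in Set.Icc (0:ℝ) a, ∫ y in Set.Icc (0:ℝ) b, g x y
      = ∫ y in Set.Icc (0:ℝ) b, ∫ x in Set.Icc (0:ℝ) a, g x y := by
  have hint : IntegrableOn (Function.uncurry g) (Set.Icc (0:ℝ) a ×ˢ Set.Icc (0:ℝ) b)
      ((volume : Measure ℝ).prod (volume : Measure ℝ)) :=
    hg.continuousOn.integrableOn_compact (isCompact_Icc.prod isCompact_Icc)
  have hint2 : Integrable (Function.uncurry g)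
      (((volume : Measure ℝ).restrict (Set.Icc 0 a)).prod
        ((volume : Measure ℝ).restrict (Set.Icc 0 b))) := by
    rw [Measure.prod_restrict]; exact hint
  exact MeasureTheory.integral_integral_swap hint2

lemma ibp1D (L : ℝ) (hL : 0 < L) (φ ψ φ' ψ' : ℝ → ℝ)
    (hφ : ∀ t, HasDerivAt φ (φ' t) t) (hψ : ∀ t, HasDerivAt ψ (ψ' t) t)
    (hφ'c : Continuous φ') (hψ'c : Continuous ψ')
    (hφp : φ (0 + L) = φ 0) (hψp : ψ (0 + L) = ψ 0) :
    ∫ t in Set.Icc (0:ℝ) L, φ' t * ψ t = - ∫ t in Set.Icc (0:ℝ) L, φ t * ψ' t := by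
  have hφc : Continuous φ := continuous_iff_continuousAt.mpr fun t => (hφ t).continuousAt
  have hψc : Continuous ψ := continuous_iff_continuousAt.mpr fun t => (hψ t).continuousAt
  have key : ∫ t in (0:ℝ)..L, φ' t * ψ t + φ t * ψ' t = φ L * ψ L - φ 0 * ψ 0 :=
    intervalIntegral.integral_deriv_mul_eq_sub_of_hasDerivAt
      hφc.continuousOn hψc.continuousOn
      (fun t _ => hφ t) (fun t _ => hψ t)
      (hφ'c.intervalIntegrable 0 L) (hψ'c.intervalIntegrable 0 L)
  have hz : φ L * ψ L - φ 0 * ψ 0 = 0 := by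
    rw [show φ L = φ 0 by rw [← hφp]; norm_num, show ψ L = ψ 0 by rw [← hψp]; norm_num]
    ring
  rw [intervalIntegral.integral_add (f := fun t => φ' t * ψ t) (g := fun t => φ t * ψ' t)
    ((hφ'c.mul hψc).intervalIntegrable 0 L) ((hφc.mul hψ'c).intervalIntegrable 0 L), hz] at key
  have e1 : ∫ t in Set.Icc (0:ℝ) L, φ' t * ψ t = ∫ t in (0:ℝ)..L, φ' t * ψ t := by
    rw [intervalIntegral.integral_of_le hL.le, integral_Icc_eq_integral_Ioc]
  have e2 : ∫ t in Set.Icc (0:ℝ) L, φ t * ψ' t = ∫ t in (0:ℝ)..L, φ t * ψ' t := by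
    rw [intervalIntegral.integral_of_le hL.le, integral_Icc_eq_integral_Ioc]
  rw [e1, e2]; linarith
section SwapLemma

lemma cont_P3 (f : ℝ → ℝ → ℝ → ℝ) (hf : Smooth3 f) :
    Continuous (fun p : ℝ × ℝ × ℝ => f p.1 p.2.1 p.2.2) := ContDiff.continuous hf

lemma cont_sliceY (f : ℝ → ℝ → ℝ → ℝ) (hf : Smooth3 f) (x z : ℝ) :
    Continuous (fun t => f x t z) :=
  (cont_P3 f hf).comp
    ((continuous_const.prodMk (continuous_id.prodMk continuous_const)) :
      Continuous fun t : ℝ => (x, t, z))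

lemma cont_sliceX (f : ℝ → ℝ → ℝ → ℝ) (hf : Smooth3 f) (y z : ℝ) :
    Continuous (fun t => f t y z) :=
  (cont_P3 f hf).comp
    ((continuous_id.prodMk (continuous_const.prodMk continuous_const)) :
      Continuous fun t : ℝ => (t, y, z))

lemma swapXY (L H : ℝ) (hL : 0 < L) (hH : 0 < H) (F G : ℝ → ℝ → ℝ → ℝ)
    (hF : Smooth3 F) (hG : Smooth3 G) (hFp : PerXY L F) (hGp : PerXY L G) :
    ∫ p in Omega L H, pX F p.1 p.2.1 p.2.2 * pY G p.1 p.2.1 p.2.2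
      = ∫ p in Omega L H, pY F p.1 p.2.1 p.2.2 * pX G p.1 p.2.1 p.2.2 := by
  have hsF : Smooth3 (pX F) := smooth_pX F hF
  have hsYF : Smooth3 (pY F) := smooth_pY F hF
  have hsXYF : Smooth3 (pX (pY F)) := smooth_pX (pY F) hsYF
  have hsYXF : Smooth3 (pY (pX F)) := smooth_pY (pX F) hsF
  have hsXG : Smooth3 (pX G) := smooth_pX G hG
  have hsYG : Smooth3 (pY G) := smooth_pY G hG
  have c1 : Continuous (fun p : ℝ × ℝ × ℝ => pX F p.1 p.2.1 p.2.2 * pY G p.1 p.2.1 p.2.2) :=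
    (cont_P3 _ hsF).mul (cont_P3 _ hsYG)
  have c2 : Continuous (fun p : ℝ × ℝ × ℝ => pY F p.1 p.2.1 p.2.2 * pX G p.1 p.2.1 p.2.2) :=
    (cont_P3 _ hsYF).mul (cont_P3 _ hsXG)
  unfold Omega
  rw [tripleZXY L H _ c1, tripleZXY L H _ c2]
  apply setIntegral_congr_fun measurableSet_Icc
  intro z _
  show (∫ x in Set.Icc (0:ℝ) L, ∫ y in Set.Icc (0:ℝ) L, pX F x y z * pY G x y z)
      = ∫ x in Set.Icc (0:ℝ) L, ∫ y in Set.Icc (0:ℝ) L, pY F x y z * pX G x y z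
  -- the two-dimensional identity at fixed z
  have stepA : ∀ x : ℝ, ∫ y in Set.Icc (0:ℝ) L, pX F x y z * pY G x y z
      = - ∫ y in Set.Icc (0:ℝ) L, pX (pY F) x y z * G x y z := by
    intro x
    have hφ : ∀ t : ℝ, HasDerivAt (fun s => G x s z) (pY G x t z) t := by
      intro t; rw [pY_eq G hG]; exact hasDerivAt_sliceY G hG x t z
    have hψ : ∀ t : ℝ, HasDerivAt (fun s => pX F x s z) (pY (pX F) x t z) t := by
      intro t; rw [pY_eq (pX F) hsF]; exact hasDerivAt_sliceY (pX F) hsF x t z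
    have key := ibp1D L hL (fun s => G x s z) (fun s => pX F x s z)
      (fun t => pY G x t z) (fun t => pY (pX F) x t z) hφ hψ
      (cont_sliceY (pY G) hsYG x z) (cont_sliceY (pY (pX F)) hsYXF x z)
      ((hGp x 0 z).2) ((perXY_pX hFp x 0 z).2)
    calc ∫ y in Set.Icc (0:ℝ) L, pX F x y z * pY G x y z
        = ∫ y in Set.Icc (0:ℝ) L, pY G x y z * pX F x y z :=
          setIntegral_congr_fun measurableSet_Icc (fun y _ => mul_comm _ _)
      _ = - ∫ y in Set.Icc (0:ℝ) L, G x y z * pY (pX F) x y z := key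
      _ = - ∫ y in Set.Icc (0:ℝ) L, pX (pY F) x y z * G x y z := by
          congr 1
          apply setIntegral_congr_fun measurableSet_Icc
          intro y _
          show G x y z * pY (pX F) x y z = pX (pY F) x y z * G x y z
          rw [pXpY_comm F hF, mul_comm]
  have stepB : ∀ y : ℝ, ∫ x in Set.Icc (0:ℝ) L, pX (pY F) x y z * G x y z
      = - ∫ x in Set.Icc (0:ℝ) L, pY F x y z * pX G x y z := by
    intro y
    have hφ : ∀ t : ℝ, HasDerivAt (fun s => pY F s y z) (pX (pY F) t y z) t := by
      intro t; rw [pX_eq (pY F) hsYF]; exact hasDerivAt_sliceX (pY F) hsYF t y z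
    have hψ : ∀ t : ℝ, HasDerivAt (fun s => G s y z) (pX G t y z) t := by
      intro t; rw [pX_eq G hG]; exact hasDerivAt_sliceX G hG t y z
    exact ibp1D L hL (fun s => pY F s y z) (fun s => G s y z)
      (fun t => pX (pY F) t y z) (fun t => pX G t y z) hφ hψ
      (cont_sliceX (pX (pY F)) hsXYF y z) (cont_sliceX (pX G) hsXG y z)
      ((perXY_pY hFp 0 y z).1) ((hGp 0 y z).1)
  have hcurve : Continuous (fun q : ℝ × ℝ => (q.1, q.2, z)) :=
    continuous_fst.prodMk (continuous_snd.prodMk continuous_const)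
  have cu1 : Continuous (Function.uncurry fun x y => pX (pY F) x y z * G x y z) :=
    ((cont_P3 _ hsXYF).comp hcurve).mul ((cont_P3 _ hG).comp hcurve)
  have cu2 : Continuous (Function.uncurry fun x y => pY F x y z * pX G x y z) :=
    ((cont_P3 _ hsYF).comp hcurve).mul ((cont_P3 _ hsXG).comp hcurve)
  calc ∫ x in Set.Icc (0:ℝ) L, ∫ y in Set.Icc (0:ℝ) L, pX F x y z * pY G x y z
      = ∫ x in Set.Icc (0:ℝ) L, - ∫ y in Set.Icc (0:ℝ) L, pX (pY F) x y z * G x y z :=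
        setIntegral_congr_fun measurableSet_Icc (fun x _ => stepA x)
    _ = - ∫ x in Set.Icc (0:ℝ) L, ∫ y in Set.Icc (0:ℝ) L, pX (pY F) x y z * G x y z :=
        integral_neg _
    _ = - ∫ y in Set.Icc (0:ℝ) L, ∫ x in Set.Icc (0:ℝ) L, pX (pY F) x y z * G x y z := by
        rw [swap2D L L _ cu1]
    _ = - ∫ y in Set.Icc (0:ℝ) L, - ∫ x in Set.Icc (0:ℝ) L, pY F x y z * pX G x y z := by
        congr 1
        exact setIntegral_congr_fun measurableSet_Icc (fun y _ => stepB y)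
    _ = ∫ y in Set.Icc (0:ℝ) L, ∫ x in Set.Icc (0:ℝ) L, pY F x y z * pX G x y z := by
        rw [integral_neg, neg_neg]
    _ = ∫ x in Set.Icc (0:ℝ) L, ∫ y in Set.Icc (0:ℝ) L, pY F x y z * pX G x y z :=
        (swap2D L L _ cu2).symm

end SwapLemma

/-- Identity (lempr7): ∫(ε²w_zz² + 2ω₃,z²) = ∫((u_xz − v_yz)² + 2(u_yz² + v_xz²)),
and in particular the left side dominates 2∫(u_yz² + v_xz²). -/
theorem lempr7 (L H : ℝ) (hL : 0 < L) (hH : 0 < H) (ε : ℝ) (hε : 0 < ε)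
    (u v w : ℝ → ℝ → ℝ → ℝ)
    (hu : Smooth3 u) (hv : Smooth3 v) (hw : Smooth3 w)
    (hup : PerXY L u) (hvp : PerXY L v) (hwp : PerXY L w)
    (hdiv : ∀ x y z : ℝ, ε * pZ w x y z = -(pX u x y z + pY v x y z)) :
    ((∫ p in Omega L H,
        ε^2 * (pZ (pZ w) p.1 p.2.1 p.2.2)^2 + 2 * (pZ (om u v) p.1 p.2.1 p.2.2)^2)
      = ∫ p in Omega L H,
          (pX (pZ u) p.1 p.2.1 p.2.2 - pY (pZ v) p.1 p.2.1 p.2.2)^2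
          + 2 * ((pY (pZ u) p.1 p.2.1 p.2.2)^2 + (pX (pZ v) p.1 p.2.1 p.2.2)^2))
    ∧ ((∫ p in Omega L H,
        ε^2 * (pZ (pZ w) p.1 p.2.1 p.2.2)^2 + 2 * (pZ (om u v) p.1 p.2.1 p.2.2)^2)
      ≥ 2 * ∫ p in Omega L H,
          (pY (pZ u) p.1 p.2.1 p.2.2)^2 + (pX (pZ v) p.1 p.2.1 p.2.2)^2) := by
  -- abbreviations
  set a : ℝ × ℝ × ℝ → ℝ := fun p => pX (pZ u) p.1 p.2.1 p.2.2 with ha_def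
  set b : ℝ × ℝ × ℝ → ℝ := fun p => pY (pZ v) p.1 p.2.1 p.2.2 with hb_def
  set c : ℝ × ℝ × ℝ → ℝ := fun p => pX (pZ v) p.1 p.2.1 p.2.2 with hc_def
  set d : ℝ × ℝ × ℝ → ℝ := fun p => pY (pZ u) p.1 p.2.1 p.2.2 with hd_def
  -- smoothness of the z-derivatives
  have hzu : Smooth3 (pZ u) := smooth_pZ u hu
  have hzv : Smooth3 (pZ v) := smooth_pZ v hv
  have ca : Continuous a := cont_P3 _ (smooth_pX (pZ u) hzu)
  have cb : Continuous b := cont_P3 _ (smooth_pY (pZ v) hzv)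
  have cc' : Continuous c := cont_P3 _ (smooth_pX (pZ v) hzv)
  have cd : Continuous d := cont_P3 _ (smooth_pY (pZ u) hzu)
  -- pointwise identity for ε w_zz
  have hA : ∀ x y z : ℝ, ε * pZ (pZ w) x y z = -(pX (pZ u) x y z + pY (pZ v) x y z) := by
    intro x y z
    have h1 : HasDerivAt (fun s => ε * pZ w x y s) (ε * pZ (pZ w) x y z) z := by
      have h := hasDerivAt_sliceZ (pZ w) (smooth_pZ w hw) x y z
      rw [← pZ_eq (pZ w) (smooth_pZ w hw)] at h
      exact h.const_mul ε
    have h2 : HasDerivAt (fun s => -(pX u x y s + pY v x y s))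
        (-(pZ (pX u) x y z + pZ (pY v) x y z)) z := by
      have hA1 := hasDerivAt_sliceZ (pX u) (smooth_pX u hu) x y z
      rw [← pZ_eq (pX u) (smooth_pX u hu)] at hA1
      have hA2 := hasDerivAt_sliceZ (pY v) (smooth_pY v hv) x y z
      rw [← pZ_eq (pY v) (smooth_pY v hv)] at hA2
      exact (hA1.add hA2).neg
    have heq : (fun s => ε * pZ w x y s) = fun s => -(pX u x y s + pY v x y s) :=
      funext fun s => hdiv x y s
    rw [heq] at h1
    have h3 := h1.unique h2
    rw [h3, pXpZ_comm u hu, pYpZ_comm v hv]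
  -- pointwise identity for ω₃,z
  have hB : ∀ x y z : ℝ, pZ (om u v) x y z = pX (pZ v) x y z - pY (pZ u) x y z := by
    intro x y z
    have hB1 := hasDerivAt_sliceZ (pX v) (smooth_pX v hv) x y z
    rw [← pZ_eq (pX v) (smooth_pX v hv)] at hB1
    have hB2 := hasDerivAt_sliceZ (pY u) (smooth_pY u hu) x y z
    rw [← pZ_eq (pY u) (smooth_pY u hu)] at hB2
    have h3 := (hB1.sub hB2).deriv
    rw [pXpZ_comm v hv, pYpZ_comm u hu]
    exact h3
  -- rewrite the left-hand integrand
  have hLfun : (fun p : ℝ × ℝ × ℝ =>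
        ε^2 * (pZ (pZ w) p.1 p.2.1 p.2.2)^2 + 2 * (pZ (om u v) p.1 p.2.1 p.2.2)^2)
      = fun p => (a p + b p)^2 + 2 * (c p - d p)^2 := by
    funext p
    have h1 := hA p.1 p.2.1 p.2.2
    have h2 := hB p.1 p.2.1 p.2.2
    have e1 : ε^2 * (pZ (pZ w) p.1 p.2.1 p.2.2)^2 = (a p + b p)^2 := by
      calc ε^2 * (pZ (pZ w) p.1 p.2.1 p.2.2)^2
          = (ε * pZ (pZ w) p.1 p.2.1 p.2.2)^2 := by ring
        _ = (-(a p + b p))^2 := by rw [h1]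
        _ = (a p + b p)^2 := by ring
    rw [e1, h2]
  have hOmM : MeasurableSet (Omega L H) :=
    measurableSet_Icc.prod (measurableSet_Icc.prod measurableSet_Icc)
  have hOmC : IsCompact (Omega L H) :=
    isCompact_Icc.prod (isCompact_Icc.prod isCompact_Icc)
  have integr : ∀ g : ℝ × ℝ × ℝ → ℝ, Continuous g → IntegrableOn g (Omega L H) volume :=
    fun g hg => hg.continuousOn.integrableOn_compact hOmC
  -- the integration by parts identity
  have hswap : (∫ p in Omega L H, a p * b p) = ∫ p in Omega L H, d p * c p :=
    swapXY L H hL hH (pZ u) (pZ v) hzu hzv (perXY_pZ hup) (perXY_pZ hvp)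
  -- main equality
  have main : (∫ p in Omega L H,
        ε^2 * (pZ (pZ w) p.1 p.2.1 p.2.2)^2 + 2 * (pZ (om u v) p.1 p.2.1 p.2.2)^2)
      = ∫ p in Omega L H, (a p - b p)^2 + 2 * (d p^2 + c p^2) := by
    rw [hLfun]
    have hsplit : (fun p : ℝ × ℝ × ℝ => (a p + b p)^2 + 2 * (c p - d p)^2)
        = fun p => ((a p - b p)^2 + 2 * (d p^2 + c p^2)) + (4 * (a p * b p) - 4 * (d p * c p)) := by
      funext p; ring
    rw [hsplit]
    rw [integral_add (integr _ (by fun_prop)) (integr _ (by fun_prop)),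
      integral_sub (integr _ (by fun_prop)) (integr _ (by fun_prop)),
      integral_const_mul, integral_const_mul, hswap]
    ring
  constructor
  · exact main
  · rw [main, ← integral_const_mul]
    have i1 : IntegrableOn (fun p : ℝ × ℝ × ℝ => 2 * (d p^2 + c p^2)) (Omega L H) volume :=
      integr _ (by fun_prop)
    have i2 : IntegrableOn (fun p : ℝ × ℝ × ℝ => (a p - b p)^2 + 2 * (d p^2 + c p^2))
        (Omega L H) volume := integr _ (by fun_prop)
    have h := setIntegral_mono_on i1 i2 hOmM
      (fun p _ => by nlinarith [sq_nonneg (a p - b p)])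
    exact h
end
end

section
/- Let u, v be smooth on ℝ² × [0,H], L-periodic in x and y, with u_z = v_z = 0 at z = 0 and z = H. Set v⃗ = (u,v,0), v⃗_z = (u_z, v_z, 0), v⃗_{zz} = (u_{zz}, v_{zz}, 0). Then ‖v⃗_z‖₃ ≤ 6^{1/2} ‖v⃗_{zz}‖₂^{1/2} ‖v⃗‖₆^{1/2}. -/
open MeasureTheory Real intervalIntegral ContDiff

noncomputable section

lemma hasDerivAt_abs_mul (x : ℝ) : HasDerivAt (fun t : ℝ => |t| * t) (2 * |x|) x := by
  rcases lt_trichotomy x 0 with hx | hx | hx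
  · have : (fun t : ℝ => |t| * t) =ᶠ[nhds x] fun t => -(t * t) := by
      filter_upwards [Iio_mem_nhds hx] with t ht
      rw [abs_of_neg ht]; ring
    have h := ((hasDerivAt_id x).mul (hasDerivAt_id x)).neg
    refine HasDerivAt.congr_of_eventuallyEq ?_ this
    exact h.congr_deriv (by rw [abs_of_neg hx]; simp only [id]; ring)
  · subst hx
    rw [hasDerivAt_iff_tendsto_slope]
    have h : (slope (fun t : ℝ => |t| * t) 0) =ᶠ[nhdsWithin 0 {(0:ℝ)}ᶜ] fun t => |t| := by
      filter_upwards [self_mem_nhdsWithin] with t ht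
      simp only [slope, vsub_eq_sub, sub_zero, abs_zero, zero_mul, smul_eq_mul]
      rw [inv_mul_eq_div, mul_div_assoc, div_self ht, mul_one]
    rw [Filter.tendsto_congr' h]
    have : Filter.Tendsto (fun t : ℝ => |t|) (nhds 0) (nhds (2 * |(0:ℝ)|)) := by
      simpa using continuous_abs.tendsto (0:ℝ)
    exact this.mono_left nhdsWithin_le_nhds
  · have : (fun t : ℝ => |t| * t) =ᶠ[nhds x] fun t => t * t := by
      filter_upwards [Ioi_mem_nhds hx] with t ht
      rw [abs_of_pos ht]
    have h := (hasDerivAt_id x).mul (hasDerivAt_id x)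
    refine HasDerivAt.congr_of_eventuallyEq ?_ this
    exact h.congr_deriv (by rw [abs_of_pos hx]; simp only [id]; ring)

def F3 (f : ℝ → ℝ → ℝ → ℝ) : ℝ × ℝ × ℝ → ℝ := fun p => f p.1 p.2.1 p.2.2

lemma pZ_eq_fderiv {f} (hf : Smooth3 f) (x y z : ℝ) :
    pZ f x y z = fderiv ℝ (F3 f) (x, y, z) (0, 0, 1) := by
  have hline : HasDerivAt (fun s : ℝ => ((x, y, s) : ℝ × ℝ × ℝ)) (0, 0, 1) z :=
    (hasDerivAt_const z x).prodMk ((hasDerivAt_const z y).prodMk (hasDerivAt_id z))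
  have h1 : HasFDerivAt (F3 f) (fderiv ℝ (F3 f) (x, y, z)) (x, y, z) :=
    (hf.differentiable (by simp) (x, y, z)).hasFDerivAt
  have hd := h1.comp_hasDerivAt z hline
  have h2 := hd.deriv
  simp only [Function.comp_def, F3] at h2
  rw [pZ]
  exact h2

lemma smooth3_pZ {f} (hf : Smooth3 f) : Smooth3 (pZ f) := by
  have he : (fun p : ℝ × ℝ × ℝ => pZ f p.1 p.2.1 p.2.2)
      = fun p => fderiv ℝ (F3 f) p (0, 0, 1) := by
    funext p
    exact pZ_eq_fderiv hf p.1 p.2.1 p.2.2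
  unfold Smooth3
  rw [he]
  exact (hf.fderiv_right ((by simp))).clm_apply contDiff_const

lemma lineZ_contDiff {f} (hf : Smooth3 f) (x y : ℝ) : ContDiff ℝ (⊤ : ℕ∞) (fun z => f x y z) :=
  hf.comp (contDiff_const.prodMk (contDiff_const.prodMk contDiff_id))

lemma abs_cube (a : ℝ) : |a| * a * a = |a| ^ 3 := by
  rcases abs_cases a with ⟨h1, _⟩ | ⟨h1, _⟩ <;> rw [h1] <;> ring

lemma line_IBP {g : ℝ → ℝ} (hg : ContDiff ℝ (⊤ : ℕ∞) g) {H : ℝ} (hH : 0 < H)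
    (h0 : deriv g 0 = 0) (hHd : deriv g H = 0) :
    ∫ z in Set.Icc (0:ℝ) H, |deriv g z| ^ 3
      ≤ ∫ z in Set.Icc (0:ℝ) H, 2 * (|deriv g z| * (|deriv (deriv g) z| * |g z|)) := by
  have hone : (1 : WithTop ℕ∞) ≤ ∞ := by exact_mod_cast le_top
  set g1 := deriv g with hg1def
  set g2 := deriv (deriv g) with hg2def
  have hginf : ContDiff ℝ ∞ g := hg.of_le (by simp)
  have hg1c : ContDiff ℝ ∞ g1 := (contDiff_infty_iff_deriv.mp hginf).2
  have hcg : Continuous g := hginf.continuous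
  have hcg1 : Continuous g1 := hg1c.continuous
  have hcg2 : Continuous g2 := hg1c.continuous_deriv hone
  have hgd : ∀ t, HasDerivAt g (g1 t) t := fun t =>
    ((hginf.differentiable (by simp)) t).hasDerivAt
  have hg1d : ∀ t, HasDerivAt g1 (g2 t) t := fun t =>
    ((hg1c.differentiable (by simp)) t).hasDerivAt
  have hF : ∀ t, HasDerivAt (fun t => |g1 t| * g1 t * g t)
      ((2 * |g1 t| * g2 t) * g t + (|g1 t| * g1 t) * g1 t) t := by
    intro t
    have h1 : HasDerivAt (fun t => |g1 t| * g1 t) (2 * |g1 t| * g2 t) t := by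
      have := (hasDerivAt_abs_mul (g1 t)).comp t (hg1d t)
      simpa [Function.comp_def, mul_comm, mul_assoc, mul_left_comm] using this
    exact h1.mul (hgd t)
  have hcont : Continuous fun t => (2 * |g1 t| * g2 t) * g t + (|g1 t| * g1 t) * g1 t := by
    continuity
  have key : (∫ t in (0:ℝ)..H, ((2 * |g1 t| * g2 t) * g t + (|g1 t| * g1 t) * g1 t)) = 0 := by
    rw [integral_eq_sub_of_hasDerivAt (fun t _ => hF t) (hcont.intervalIntegrable 0 H)]
    rw [h0, hHd]
    simp
  have hi1 : IntervalIntegrable (fun t => (2 * |g1 t| * g2 t) * g t) volume 0 H := by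
    apply Continuous.intervalIntegrable; continuity
  have hi2 : IntervalIntegrable (fun t => |g1 t| * g1 t * g1 t) volume 0 H := by
    apply Continuous.intervalIntegrable; continuity
  rw [intervalIntegral.integral_add hi1 hi2] at key
  have key2 : (∫ t in (0:ℝ)..H, |g1 t| * g1 t * g1 t)
      = - ∫ t in (0:ℝ)..H, (2 * |g1 t| * g2 t) * g t := by linarith
  have step : (∫ t in (0:ℝ)..H, |g1 t| ^ 3)
      ≤ ∫ t in (0:ℝ)..H, 2 * (|g1 t| * (|g2 t| * |g t|)) := by
    have e1 : (∫ t in (0:ℝ)..H, |g1 t| ^ 3) = ∫ t in (0:ℝ)..H, |g1 t| * g1 t * g1 t := by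
      apply intervalIntegral.integral_congr; intro t _; exact (abs_cube (g1 t)).symm
    rw [e1, key2]
    have h3 : - (∫ t in (0:ℝ)..H, (2 * |g1 t| * g2 t) * g t)
        ≤ |∫ t in (0:ℝ)..H, (2 * |g1 t| * g2 t) * g t| := neg_le_abs _
    refine h3.trans ?_
    refine (intervalIntegral.abs_integral_le_integral_abs hH.le).trans ?_
    apply le_of_eq
    apply intervalIntegral.integral_congr; intro t _
    simp only [abs_mul, abs_abs, abs_two]
    ring
  calc (∫ z in Set.Icc (0:ℝ) H, |g1 z| ^ 3)
      = ∫ t in (0:ℝ)..H, |g1 t| ^ 3 := by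
        rw [intervalIntegral.integral_of_le hH.le, MeasureTheory.integral_Icc_eq_integral_Ioc]
    _ ≤ ∫ t in (0:ℝ)..H, 2 * (|g1 t| * (|g2 t| * |g t|)) := step
    _ = ∫ z in Set.Icc (0:ℝ) H, 2 * (|g1 z| * (|g2 z| * |g z|)) := by
        rw [intervalIntegral.integral_of_le hH.le, MeasureTheory.integral_Icc_eq_integral_Ioc]

lemma omega_IBP {L H : ℝ} (hL : 0 < L) (hH : 0 < H) {f : ℝ → ℝ → ℝ → ℝ} (hf : Smooth3 f)
    (bc0 : ∀ x y : ℝ, pZ f x y 0 = 0) (bcH : ∀ x y : ℝ, pZ f x y H = 0) :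
    (∫ p in Omega L H, |pZ f p.1 p.2.1 p.2.2| ^ 3)
      ≤ ∫ p in Omega L H,
          2 * (|pZ f p.1 p.2.1 p.2.2| * (|pZ (pZ f) p.1 p.2.1 p.2.2| * |f p.1 p.2.1 p.2.2|)) := by
  have hC0 : Continuous (fun p : ℝ×ℝ×ℝ => f p.1 p.2.1 p.2.2) := hf.continuous
  have hC1 : Continuous (fun p : ℝ×ℝ×ℝ => pZ f p.1 p.2.1 p.2.2) := (smooth3_pZ hf).continuous
  have hC2 : Continuous (fun p : ℝ×ℝ×ℝ => pZ (pZ f) p.1 p.2.1 p.2.2) :=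
    (smooth3_pZ (smooth3_pZ hf)).continuous
  set G3 : ℝ×ℝ×ℝ → ℝ := fun p => |pZ f p.1 p.2.1 p.2.2| ^ 3 with hG3
  set GR : ℝ×ℝ×ℝ → ℝ := fun p =>
    2 * (|pZ f p.1 p.2.1 p.2.2| * (|pZ (pZ f) p.1 p.2.1 p.2.2| * |f p.1 p.2.1 p.2.2|)) with hGR
  have hG3c : Continuous G3 := (hC1.abs).pow 3
  have hGRc : Continuous GR := continuous_const.mul (hC1.abs.mul (hC2.abs.mul hC0.abs))
  have hO : IsCompact (Omega L H) := isCompact_Icc.prod (isCompact_Icc.prod isCompact_Icc)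
  set μ1 := (volume : Measure ℝ).restrict (Set.Icc (0:ℝ) L) with hμ1
  set μH := (volume : Measure ℝ).restrict (Set.Icc (0:ℝ) H) with hμH
  set ν := μ1.prod μH with hν
  have hνeq : ν = (volume : Measure (ℝ×ℝ)).restrict (Set.Icc (0:ℝ) L ×ˢ Set.Icc (0:ℝ) H) := by
    rw [hν, hμ1, hμH, Measure.prod_restrict, ← Measure.volume_eq_prod]
  have hμeq : (volume : Measure (ℝ×ℝ×ℝ)).restrict (Omega L H) = μ1.prod ν := by
    rw [hνeq, hμ1, Measure.prod_restrict, ← Measure.volume_eq_prod]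
    rfl
  have hI3 : Integrable G3 (μ1.prod ν) := by
    rw [← hμeq]; exact hG3c.continuousOn.integrableOn_compact hO
  have hIR : Integrable GR (μ1.prod ν) := by
    rw [← hμeq]; exact hGRc.continuousOn.integrableOn_compact hO
  have hslice3 : ∀ x : ℝ, Integrable (fun q : ℝ×ℝ => G3 (x, q)) ν := by
    intro x
    rw [hνeq]
    exact (hG3c.comp (Continuous.prodMk_right x)).continuousOn.integrableOn_compact
      (isCompact_Icc.prod isCompact_Icc)
  have hsliceR : ∀ x : ℝ, Integrable (fun q : ℝ×ℝ => GR (x, q)) ν := by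
    intro x
    rw [hνeq]
    exact (hGRc.comp (Continuous.prodMk_right x)).continuousOn.integrableOn_compact
      (isCompact_Icc.prod isCompact_Icc)
  rw [show ∫ p in Omega L H, G3 p = ∫ p, G3 p ∂(μ1.prod ν) by rw [hμeq],
      show ∫ p in Omega L H, GR p = ∫ p, GR p ∂(μ1.prod ν) by rw [hμeq]]
  rw [integral_prod _ hI3, integral_prod _ hIR]
  refine integral_mono hI3.integral_prod_left hIR.integral_prod_left (fun x => ?_)
  rw [integral_prod _ (hslice3 x), integral_prod _ (hsliceR x)]
  refine integral_mono (hslice3 x).integral_prod_left (hsliceR x).integral_prod_left (fun y => ?_)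
  have := line_IBP (lineZ_contDiff hf x y) hH (bc0 x y) (bcH x y)
  exact this

lemma memLp_of_cont {s : Set (ℝ×ℝ×ℝ)} (hs : IsCompact s) (hsm : MeasurableSet s)
    {f : ℝ×ℝ×ℝ → ℝ} (hf : Continuous f) (p : ENNReal) : MemLp f p (volume.restrict s) := by
  haveI : IsFiniteMeasure ((volume : Measure (ℝ×ℝ×ℝ)).restrict s) :=
    ⟨by rw [Measure.restrict_apply_univ]; exact hs.measure_lt_top⟩
  obtain ⟨C, hC⟩ := hs.exists_bound_of_continuousOn hf.continuousOn
  exact MemLp.of_bound hf.aestronglyMeasurable C (ae_restrict_of_forall_mem hsm hC)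

lemma rpow_sq_three_half {b : ℝ} (hb : 0 ≤ b) : ((b ^ 2 : ℝ)) ^ ((3:ℝ)/2) = b ^ 3 := by
  rw [← Real.rpow_natCast b 2, ← Real.rpow_mul hb, ← Real.rpow_natCast b 3]
  norm_num

lemma rpow_sq_three {b : ℝ} (hb : 0 ≤ b) : ((b ^ 2 : ℝ)) ^ ((3:ℝ)) = b ^ 6 := by
  rw [← Real.rpow_natCast b 2, ← Real.rpow_mul hb, ← Real.rpow_natCast b 6]
  norm_num

lemma holder3 {L H : ℝ} {A B C : ℝ×ℝ×ℝ → ℝ}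
    (hA : Continuous A) (hB : Continuous B) (hC : Continuous C) :
    ∫ p in Omega L H, |B p| * (|A p| * |C p|)
      ≤ (∫ p in Omega L H, |A p| ^ 2) ^ ((1:ℝ)/2) *
        ((∫ p in Omega L H, |B p| ^ 3) ^ ((1:ℝ)/3) *
         (∫ p in Omega L H, |C p| ^ 6) ^ ((1:ℝ)/6)) := by
  have hO : IsCompact (Omega L H) := isCompact_Icc.prod (isCompact_Icc.prod isCompact_Icc)
  have hOm : MeasurableSet (Omega L H) :=
    (measurableSet_Icc.prod (measurableSet_Icc.prod measurableSet_Icc))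
  set μ := (volume : Measure (ℝ×ℝ×ℝ)).restrict (Omega L H) with hμ
  have h22 : (2:ℝ).HolderConjugate 2 := (Real.holderConjugate_iff_eq_conjExponent (by norm_num)).2 (by norm_num)
  have h33 : ((3:ℝ)/2).HolderConjugate 3 := (Real.holderConjugate_iff_eq_conjExponent (by norm_num)).2 (by norm_num)
  -- Cauchy-Schwarz
  have hCS : ∫ p, |A p| * (|B p| * |C p|) ∂μ
      ≤ (∫ p, |A p| ^ (2:ℝ) ∂μ) ^ ((1:ℝ)/2) * (∫ p, (|B p| * |C p|) ^ (2:ℝ) ∂μ) ^ ((1:ℝ)/2) :=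
    integral_mul_le_Lp_mul_Lq_of_nonneg h22
      (Filter.Eventually.of_forall fun p => abs_nonneg _)
      (Filter.Eventually.of_forall fun p => mul_nonneg (abs_nonneg _) (abs_nonneg _))
      (memLp_of_cont hO hOm hA.abs _)
      (memLp_of_cont hO hOm (hB.abs.mul hC.abs) _)
  have e2 : ∀ b : ℝ, |b| ^ (2:ℝ) = |b| ^ (2:ℕ) := fun b => by
    rw [← Real.rpow_natCast |b| 2]; norm_num
  -- second Hölder
  have hH2 : ∫ p, |B p| ^ 2 * |C p| ^ 2 ∂μ
      ≤ (∫ p, (|B p| ^ 2) ^ ((3:ℝ)/2) ∂μ) ^ ((1:ℝ)/((3:ℝ)/2)) *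
        (∫ p, (|C p| ^ 2) ^ ((3:ℝ)) ∂μ) ^ ((1:ℝ)/3) :=
    integral_mul_le_Lp_mul_Lq_of_nonneg h33
      (Filter.Eventually.of_forall fun p => pow_nonneg (abs_nonneg _) _)
      (Filter.Eventually.of_forall fun p => pow_nonneg (abs_nonneg _) _)
      (memLp_of_cont hO hOm ((hB.abs).pow 2) _)
      (memLp_of_cont hO hOm ((hC.abs).pow 2) _)
  have eb : (fun p => (|B p| ^ 2 : ℝ) ^ ((3:ℝ)/2)) = fun p => |B p| ^ 3 := by
    funext p; exact rpow_sq_three_half (abs_nonneg _)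
  have ec : (fun p => (|C p| ^ 2 : ℝ) ^ ((3:ℝ))) = fun p => |C p| ^ 6 := by
    funext p; exact rpow_sq_three (abs_nonneg _)
  rw [eb, ec] at hH2
  have hBC2 : ∫ p, (|B p| * |C p|) ^ (2:ℝ) ∂μ = ∫ p, |B p| ^ 2 * |C p| ^ 2 ∂μ := by
    congr 1; funext p
    rw [show ((2:ℝ)) = ((2:ℕ):ℝ) by norm_num, Real.rpow_natCast, mul_pow]
  -- nonnegativity of integrals
  have hI3 : (0:ℝ) ≤ ∫ p, |B p| ^ 3 ∂μ :=
    integral_nonneg fun p => pow_nonneg (abs_nonneg _) _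
  have hI6 : (0:ℝ) ≤ ∫ p, |C p| ^ 6 ∂μ :=
    integral_nonneg fun p => pow_nonneg (abs_nonneg _) _
  have hstep : (∫ p, (|B p| * |C p|) ^ (2:ℝ) ∂μ) ^ ((1:ℝ)/2)
      ≤ (∫ p, |B p| ^ 3 ∂μ) ^ ((1:ℝ)/3) * (∫ p, |C p| ^ 6 ∂μ) ^ ((1:ℝ)/6) := by
    rw [hBC2]
    have h1 : (∫ p, |B p| ^ 2 * |C p| ^ 2 ∂μ) ^ ((1:ℝ)/2)
        ≤ ((∫ p, |B p| ^ 3 ∂μ) ^ ((2:ℝ)/3) * (∫ p, |C p| ^ 6 ∂μ) ^ ((1:ℝ)/3)) ^ ((1:ℝ)/2) := by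
      apply Real.rpow_le_rpow (integral_nonneg fun p => mul_nonneg (pow_nonneg (abs_nonneg _) _)
        (pow_nonneg (abs_nonneg _) _)) ?_ (by norm_num)
      convert hH2 using 2
      norm_num
    refine h1.trans (le_of_eq ?_)
    rw [Real.mul_rpow (Real.rpow_nonneg hI3 _) (Real.rpow_nonneg hI6 _),
      ← Real.rpow_mul hI3, ← Real.rpow_mul hI6]
    norm_num
  calc ∫ p, |B p| * (|A p| * |C p|) ∂μ
      = ∫ p, |A p| * (|B p| * |C p|) ∂μ := by congr 1; funext p; ring
    _ ≤ (∫ p, |A p| ^ (2:ℝ) ∂μ) ^ ((1:ℝ)/2) * (∫ p, (|B p| * |C p|) ^ (2:ℝ) ∂μ) ^ ((1:ℝ)/2) := hCS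
    _ ≤ (∫ p, |A p| ^ 2 ∂μ) ^ ((1:ℝ)/2) *
        ((∫ p, |B p| ^ 3 ∂μ) ^ ((1:ℝ)/3) * (∫ p, |C p| ^ 6 ∂μ) ^ ((1:ℝ)/6)) := by
      simp_rw [e2]
      exact mul_le_mul_of_nonneg_left hstep (Real.rpow_nonneg
        (integral_nonneg fun p => pow_nonneg (abs_nonneg _) _) _)

lemma abs_le_sqrt_add (a b : ℝ) : |a| ≤ Real.sqrt (a^2 + b^2) := by
  rw [← Real.sqrt_sq_eq_abs]
  exact Real.sqrt_le_sqrt (by nlinarith [sq_nonneg b])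

lemma sqrt_cube_le (a b : ℝ) :
    (Real.sqrt (a^2 + b^2))^3 ≤ Real.sqrt 2 * (|a|^3 + |b|^3) := by
  set w := Real.sqrt (a^2 + b^2) with hw
  have hw0 : 0 ≤ w := Real.sqrt_nonneg _
  have hw2 : w^2 = a^2 + b^2 := Real.sq_sqrt (by positivity)
  set s := |a| with hs
  set t := |b| with ht
  have hs0 : 0 ≤ s := abs_nonneg a
  have ht0 : 0 ≤ t := abs_nonneg b
  have hst : w^2 = s^2 + t^2 := by rw [hw2, hs, ht, sq_abs, sq_abs]
  have key : (w^3)^2 ≤ (2:ℝ) * (s^3 + t^3)^2 := by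
    have hfac : 2*(s^3+t^3)^2 - (s^2+t^2)^3
        = (s-t)^2 * (s^4 + 2*s^3*t + 2*s*t^3 + t^4) := by ring
    have hpos : 0 ≤ (s-t)^2 * (s^4 + 2*s^3*t + 2*s*t^3 + t^4) := by positivity
    have : (w^3)^2 = (s^2+t^2)^3 := by rw [← hst]; ring
    linarith
  have h1 : w^3 = Real.sqrt ((w^3)^2) := (Real.sqrt_sq (by positivity)).symm
  rw [h1]
  have h2 : Real.sqrt ((w^3)^2) ≤ Real.sqrt ((2:ℝ) * (s^3+t^3)^2) := Real.sqrt_le_sqrt key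
  refine h2.trans (le_of_eq ?_)
  rw [Real.sqrt_mul (by norm_num), Real.sqrt_sq (by positivity)]

/-- (AppA1) of Lemma 4 (L3lem): ‖v⃗_z‖₃ ≤ √6 ‖v⃗_zz‖₂^{1/2} ‖v⃗‖₆^{1/2}. -/
theorem L3lem_horizontal (L H : ℝ) (hL : 0 < L) (hH : 0 < H)
    (u v : ℝ → ℝ → ℝ → ℝ) (hu : Smooth3 u) (hv : Smooth3 v)
    (hup : PerXY L u) (hvp : PerXY L v)
    (hbc : ∀ x y : ℝ, pZ u x y 0 = 0 ∧ pZ u x y H = 0 ∧ pZ v x y 0 = 0 ∧ pZ v x y H = 0) :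
    (∫ p in Omega L H,
        (Real.sqrt ((pZ u p.1 p.2.1 p.2.2)^2 + (pZ v p.1 p.2.1 p.2.2)^2))^3) ^ ((1:ℝ)/3)
      ≤ Real.sqrt 6 *
        (∫ p in Omega L H,
          (pZ (pZ u) p.1 p.2.1 p.2.2)^2 + (pZ (pZ v) p.1 p.2.1 p.2.2)^2) ^ ((1:ℝ)/4) *
        (∫ p in Omega L H,
          ((u p.1 p.2.1 p.2.2)^2 + (v p.1 p.2.1 p.2.2)^2)^3) ^ ((1:ℝ)/12) := by
  have hO : IsCompact (Omega L H) := isCompact_Icc.prod (isCompact_Icc.prod isCompact_Icc)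
  have hCu : Continuous fun p : ℝ×ℝ×ℝ => u p.1 p.2.1 p.2.2 := hu.continuous
  have hCv : Continuous fun p : ℝ×ℝ×ℝ => v p.1 p.2.1 p.2.2 := hv.continuous
  have hCuz : Continuous fun p : ℝ×ℝ×ℝ => pZ u p.1 p.2.1 p.2.2 := (smooth3_pZ hu).continuous
  have hCvz : Continuous fun p : ℝ×ℝ×ℝ => pZ v p.1 p.2.1 p.2.2 := (smooth3_pZ hv).continuous
  have hCuzz : Continuous fun p : ℝ×ℝ×ℝ => pZ (pZ u) p.1 p.2.1 p.2.2 :=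
    (smooth3_pZ (smooth3_pZ hu)).continuous
  have hCvzz : Continuous fun p : ℝ×ℝ×ℝ => pZ (pZ v) p.1 p.2.1 p.2.2 :=
    (smooth3_pZ (smooth3_pZ hv)).continuous
  have hCW : Continuous fun p : ℝ×ℝ×ℝ =>
      Real.sqrt ((pZ u p.1 p.2.1 p.2.2)^2 + (pZ v p.1 p.2.1 p.2.2)^2) :=
    ((hCuz.pow 2).add (hCvz.pow 2)).sqrt
  have hInt : ∀ {f : ℝ×ℝ×ℝ → ℝ}, Continuous f →
      Integrable f ((volume : Measure (ℝ×ℝ×ℝ)).restrict (Omega L H)) := fun hf =>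
    hf.continuousOn.integrableOn_compact hO
  set T : ℝ := ∫ p in Omega L H,
      (Real.sqrt ((pZ u p.1 p.2.1 p.2.2)^2 + (pZ v p.1 p.2.1 p.2.2)^2))^3 with hTdef
  set I2 : ℝ := ∫ p in Omega L H,
      (pZ (pZ u) p.1 p.2.1 p.2.2)^2 + (pZ (pZ v) p.1 p.2.1 p.2.2)^2 with hI2def
  set J : ℝ := ∫ p in Omega L H,
      ((u p.1 p.2.1 p.2.2)^2 + (v p.1 p.2.1 p.2.2)^2)^3 with hJdef
  clear_value T I2 J
  have hT0 : 0 ≤ T := by rw [hTdef]; exact integral_nonneg fun p => by positivity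
  have hI20 : 0 ≤ I2 := by rw [hI2def]; exact integral_nonneg fun p => by positivity
  have hJ0 : 0 ≤ J := by rw [hJdef]; exact integral_nonneg fun p => by positivity
  -- Step 1: T ≤ √2 (∫|u_z|³ + ∫|v_z|³)
  have h1 : T ≤ Real.sqrt 2 * ((∫ p in Omega L H, |pZ u p.1 p.2.1 p.2.2| ^ 3)
      + (∫ p in Omega L H, |pZ v p.1 p.2.1 p.2.2| ^ 3)) := by
    have hmono : T ≤ ∫ p in Omega L H,
        Real.sqrt 2 * (|pZ u p.1 p.2.1 p.2.2| ^ 3 + |pZ v p.1 p.2.1 p.2.2| ^ 3) := by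
      rw [hTdef]
      exact integral_mono (hInt (hCW.pow 3))
        (hInt (continuous_const.mul ((hCuz.abs.pow 3).add (hCvz.abs.pow 3))))
        (fun p => sqrt_cube_le _ _)
    refine hmono.trans (le_of_eq ?_)
    rw [MeasureTheory.integral_const_mul, integral_add (hInt (f := fun p => |pZ u p.1 p.2.1 p.2.2| ^ 3) (hCuz.abs.pow 3))
      (hInt (f := fun p => |pZ v p.1 p.2.1 p.2.2| ^ 3) (hCvz.abs.pow 3))]
  -- Step 2: integration by parts
  have h2u : (∫ p in Omega L H, |pZ u p.1 p.2.1 p.2.2| ^ 3)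
      ≤ 2 * ∫ p in Omega L H, |pZ u p.1 p.2.1 p.2.2| *
          (|pZ (pZ u) p.1 p.2.1 p.2.2| * |u p.1 p.2.1 p.2.2|) := by
    have h := omega_IBP hL hH hu (fun x y => (hbc x y).1) (fun x y => (hbc x y).2.1)
    rwa [MeasureTheory.integral_const_mul] at h
  have h2v : (∫ p in Omega L H, |pZ v p.1 p.2.1 p.2.2| ^ 3)
      ≤ 2 * ∫ p in Omega L H, |pZ v p.1 p.2.1 p.2.2| *
          (|pZ (pZ v) p.1 p.2.1 p.2.2| * |v p.1 p.2.1 p.2.2|) := by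
    have h := omega_IBP hL hH hv (fun x y => (hbc x y).2.2.1) (fun x y => (hbc x y).2.2.2)
    rwa [MeasureTheory.integral_const_mul] at h
  -- Step 3: Hölder
  have h3u := holder3 (L := L) (H := H) hCuzz hCuz hCu
  have h3v := holder3 (L := L) (H := H) hCvzz hCvz hCv
  -- Step 4: componentwise comparisons
  have c2u : (∫ p in Omega L H, |pZ (pZ u) p.1 p.2.1 p.2.2| ^ 2) ≤ I2 := by
    rw [hI2def]
    refine integral_mono (hInt (hCuzz.abs.pow 2))
      (hInt ((hCuzz.pow 2).add (hCvzz.pow 2))) (fun p => ?_)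
    simp only [sq_abs]
    exact le_add_of_nonneg_right (sq_nonneg _)
  have c2v : (∫ p in Omega L H, |pZ (pZ v) p.1 p.2.1 p.2.2| ^ 2) ≤ I2 := by
    rw [hI2def]
    refine integral_mono (hInt (hCvzz.abs.pow 2))
      (hInt ((hCuzz.pow 2).add (hCvzz.pow 2))) (fun p => ?_)
    simp only [sq_abs]
    exact le_add_of_nonneg_left (sq_nonneg _)
  have c3u : (∫ p in Omega L H, |pZ u p.1 p.2.1 p.2.2| ^ 3) ≤ T := by
    rw [hTdef]
    refine integral_mono (hInt (hCuz.abs.pow 3)) (hInt (hCW.pow 3)) (fun p => ?_)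
    exact pow_le_pow_left₀ (abs_nonneg _) (abs_le_sqrt_add _ _) 3
  have c3v : (∫ p in Omega L H, |pZ v p.1 p.2.1 p.2.2| ^ 3) ≤ T := by
    rw [hTdef]
    refine integral_mono (hInt (hCvz.abs.pow 3)) (hInt (hCW.pow 3)) (fun p => ?_)
    refine pow_le_pow_left₀ (abs_nonneg _) ?_ 3
    rw [show (pZ u p.1 p.2.1 p.2.2)^2 + (pZ v p.1 p.2.1 p.2.2)^2
      = (pZ v p.1 p.2.1 p.2.2)^2 + (pZ u p.1 p.2.1 p.2.2)^2 by ring]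
    exact abs_le_sqrt_add _ _
  have c6u : (∫ p in Omega L H, |u p.1 p.2.1 p.2.2| ^ 6) ≤ J := by
    rw [hJdef]
    refine integral_mono (hInt (hCu.abs.pow 6)) (hInt (((hCu.pow 2).add (hCv.pow 2)).pow 3))
      (fun p => ?_)
    have : |u p.1 p.2.1 p.2.2| ^ 6 = ((u p.1 p.2.1 p.2.2)^2)^3 := by
      rw [← abs_pow]; rw [abs_of_nonneg (by positivity)]; ring
    rw [this]
    exact pow_le_pow_left₀ (sq_nonneg _) (le_add_of_nonneg_right (sq_nonneg _)) 3
  have c6v : (∫ p in Omega L H, |v p.1 p.2.1 p.2.2| ^ 6) ≤ J := by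
    rw [hJdef]
    refine integral_mono (hInt (hCv.abs.pow 6)) (hInt (((hCu.pow 2).add (hCv.pow 2)).pow 3))
      (fun p => ?_)
    have : |v p.1 p.2.1 p.2.2| ^ 6 = ((v p.1 p.2.1 p.2.2)^2)^3 := by
      rw [← abs_pow]; rw [abs_of_nonneg (by positivity)]; ring
    rw [this]
    exact pow_le_pow_left₀ (sq_nonneg _) (le_add_of_nonneg_left (sq_nonneg _)) 3
  -- Step 5: combine into the key inequality
  set D : ℝ := I2 ^ ((1:ℝ)/2) * (T ^ ((1:ℝ)/3) * J ^ ((1:ℝ)/6)) with hDdef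
  have hD0 : 0 ≤ D := by
    rw [hDdef]
    exact mul_nonneg (Real.rpow_nonneg hI20 _)
      (mul_nonneg (Real.rpow_nonneg hT0 _) (Real.rpow_nonneg hJ0 _))
  have h4u : (∫ p in Omega L H, |pZ (pZ u) p.1 p.2.1 p.2.2| ^ 2) ^ ((1:ℝ)/2) *
      ((∫ p in Omega L H, |pZ u p.1 p.2.1 p.2.2| ^ 3) ^ ((1:ℝ)/3) *
       (∫ p in Omega L H, |u p.1 p.2.1 p.2.2| ^ 6) ^ ((1:ℝ)/6)) ≤ D := by
    rw [hDdef]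
    have r2 := Real.rpow_le_rpow (integral_nonneg fun p => by positivity) c2u
      (by norm_num : (0:ℝ) ≤ 1/2)
    have r3 := Real.rpow_le_rpow (integral_nonneg fun p => by positivity) c3u
      (by norm_num : (0:ℝ) ≤ 1/3)
    have r6 := Real.rpow_le_rpow (integral_nonneg fun p => by positivity) c6u
      (by norm_num : (0:ℝ) ≤ 1/6)
    exact mul_le_mul r2 (mul_le_mul r3 r6 (Real.rpow_nonneg (integral_nonneg fun p => by
      positivity) _) (Real.rpow_nonneg hT0 _))
      (mul_nonneg (Real.rpow_nonneg (integral_nonneg fun p => by positivity) _)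
        (Real.rpow_nonneg (integral_nonneg fun p => by positivity) _))
      (Real.rpow_nonneg hI20 _)
  have h4v : (∫ p in Omega L H, |pZ (pZ v) p.1 p.2.1 p.2.2| ^ 2) ^ ((1:ℝ)/2) *
      ((∫ p in Omega L H, |pZ v p.1 p.2.1 p.2.2| ^ 3) ^ ((1:ℝ)/3) *
       (∫ p in Omega L H, |v p.1 p.2.1 p.2.2| ^ 6) ^ ((1:ℝ)/6)) ≤ D := by
    rw [hDdef]
    have r2 := Real.rpow_le_rpow (integral_nonneg fun p => by positivity) c2v
      (by norm_num : (0:ℝ) ≤ 1/2)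
    have r3 := Real.rpow_le_rpow (integral_nonneg fun p => by positivity) c3v
      (by norm_num : (0:ℝ) ≤ 1/3)
    have r6 := Real.rpow_le_rpow (integral_nonneg fun p => by positivity) c6v
      (by norm_num : (0:ℝ) ≤ 1/6)
    exact mul_le_mul r2 (mul_le_mul r3 r6 (Real.rpow_nonneg (integral_nonneg fun p => by
      positivity) _) (Real.rpow_nonneg hT0 _))
      (mul_nonneg (Real.rpow_nonneg (integral_nonneg fun p => by positivity) _)
        (Real.rpow_nonneg (integral_nonneg fun p => by positivity) _))
      (Real.rpow_nonneg hI20 _)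
  have key : T ≤ Real.sqrt 2 * (4 * D) := by
    have hu' : (∫ p in Omega L H, |pZ u p.1 p.2.1 p.2.2| ^ 3) ≤ 2 * D :=
      h2u.trans (mul_le_mul_of_nonneg_left (h3u.trans h4u) (by norm_num))
    have hv' : (∫ p in Omega L H, |pZ v p.1 p.2.1 p.2.2| ^ 3) ≤ 2 * D :=
      h2v.trans (mul_le_mul_of_nonneg_left (h3v.trans h4v) (by norm_num))
    refine h1.trans ?_
    have : (∫ p in Omega L H, |pZ u p.1 p.2.1 p.2.2| ^ 3)
        + (∫ p in Omega L H, |pZ v p.1 p.2.1 p.2.2| ^ 3) ≤ 4 * D := by linarith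
    exact mul_le_mul_of_nonneg_left this (Real.sqrt_nonneg 2)
  -- Step 6: final algebra
  rcases eq_or_lt_of_le hT0 with h0 | hTpos
  · rw [← h0, Real.zero_rpow (by norm_num : (1:ℝ)/3 ≠ 0)]
    exact mul_nonneg (mul_nonneg (Real.sqrt_nonneg 6) (Real.rpow_nonneg hI20 _))
      (Real.rpow_nonneg hJ0 _)
  · set X : ℝ := T ^ ((1:ℝ)/3) with hXdef
    have hX : 0 < X := Real.rpow_pos_of_pos hTpos _
    have hX3 : X ^ 3 = T := by
      rw [hXdef, ← Real.rpow_natCast (T ^ ((1:ℝ)/3)) 3, ← Real.rpow_mul hT0]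
      norm_num
    have hsq : X ^ 2 ≤ 4 * Real.sqrt 2 * (I2 ^ ((1:ℝ)/2) * J ^ ((1:ℝ)/6)) := by
      have h : X ^ 3 ≤ Real.sqrt 2 * (4 * D) := by rw [hX3]; exact key
      have h' : X ^ 2 * X ≤ (4 * Real.sqrt 2 * (I2 ^ ((1:ℝ)/2) * J ^ ((1:ℝ)/6))) * X := by
        calc X ^ 2 * X = X ^ 3 := by ring
          _ ≤ Real.sqrt 2 * (4 * D) := h
          _ = (4 * Real.sqrt 2 * (I2 ^ ((1:ℝ)/2) * J ^ ((1:ℝ)/6))) * X := by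
              rw [hDdef]; ring
      exact le_of_mul_le_mul_right h' hX
    have hXle : X ≤ Real.sqrt (4 * Real.sqrt 2 * (I2 ^ ((1:ℝ)/2) * J ^ ((1:ℝ)/6))) := by
      have h := Real.sqrt_le_sqrt hsq
      rwa [Real.sqrt_sq hX.le] at h
    have hrhs : Real.sqrt (4 * Real.sqrt 2 * (I2 ^ ((1:ℝ)/2) * J ^ ((1:ℝ)/6)))
        = Real.sqrt (4 * Real.sqrt 2) * (I2 ^ ((1:ℝ)/4) * J ^ ((1:ℝ)/12)) := by
      rw [Real.sqrt_mul (by positivity : (0:ℝ) ≤ 4 * Real.sqrt 2),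
          Real.sqrt_mul (Real.rpow_nonneg hI20 _),
          Real.sqrt_eq_rpow (I2 ^ ((1:ℝ)/2)), Real.sqrt_eq_rpow (J ^ ((1:ℝ)/6)),
          ← Real.rpow_mul hI20, ← Real.rpow_mul hJ0]
      norm_num
    have hc : Real.sqrt (4 * Real.sqrt 2) ≤ Real.sqrt 6 := by
      apply Real.sqrt_le_sqrt
      nlinarith [sq_nonneg (Real.sqrt 2 - 3/2), Real.sq_sqrt (by norm_num : (0:ℝ) ≤ 2),
        Real.sqrt_nonneg 2]
    calc X ≤ Real.sqrt (4 * Real.sqrt 2) * (I2 ^ ((1:ℝ)/4) * J ^ ((1:ℝ)/12)) := by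
            rw [← hrhs]; exact hXle
      _ ≤ Real.sqrt 6 * (I2 ^ ((1:ℝ)/4) * J ^ ((1:ℝ)/12)) :=
          mul_le_mul_of_nonneg_right hc (mul_nonneg (Real.rpow_nonneg hI20 _)
            (Real.rpow_nonneg hJ0 _))
      _ = Real.sqrt 6 * I2 ^ ((1:ℝ)/4) * J ^ ((1:ℝ)/12) := by ring
end
end
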